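/- arXiv:2207.02944 — 14 statements merged into one kernel-verified Lean document; each statement's English description precedes it below -/
import Mathlib

section
/- Let (X,σ,τ) be a non-degenerate involutive set-theoretic solution of the Yang–Baxter equation of multipermutation level at most 2. Then the displacement group Dis(X) = ⟨σ_x σ_y⁻¹ : x, y ∈ X⟩ is an abelian normal subgroup of the permutation group G(X) = ⟨σ_x : x ∈ X⟩, and for any e ∈ X, G(X) is generated by Dis(X) ∪ {σ_e}. -/
/-- The map `r(x,y) = (σ_x(y), τ_y(x))` associated to a solution. -/
def rmapP {X : Type*} (σ τ : X → Equiv.Perm X) : X × X → X × X :=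
  fun p => (σ p.1 p.2, τ p.2 p.1)

/-- `r × id` acting on `X × X × X`. -/
def r12P {X : Type*} (σ τ : X → Equiv.Perm X) : X × X × X → X × X × X :=
  fun t => (σ t.1 t.2.1, τ t.2.1 t.1, t.2.2)

/-- `id × r` acting on `X × X × X`. -/
def r23P {X : Type*} (σ τ : X → Equiv.Perm X) : X × X × X → X × X × X :=
  fun t => (t.1, σ t.2.1 t.2.2, τ t.2.2 t.2.1)

/-- A non-degenerate involutive set-theoretic solution of the Yang–Baxter equation. -/
structure YBSol (X : Type*) where
  σ : X → Equiv.Perm X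
  τ : X → Equiv.Perm X
  invol : ∀ p : X × X, rmapP σ τ (rmapP σ τ p) = p
  braid : ∀ t : X × X × X,
    r12P σ τ (r23P σ τ (r12P σ τ t)) = r23P σ τ (r12P σ τ (r23P σ τ t))

/-- The permutation group `G(X)` of a solution. -/
def YBSol.G {X : Type*} (S : YBSol X) : Subgroup (Equiv.Perm X) :=
  Subgroup.closure (Set.range S.σ)

/-- The displacement group `Dis(X)` of a solution. -/
def YBSol.Dis {X : Type*} (S : YBSol X) : Subgroup (Equiv.Perm X) :=
  Subgroup.closure {g | ∃ x y : X, g = S.σ x * (S.σ y)⁻¹}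

/-- Multipermutation level at most `2`. -/
def YBSol.MPL2 {X : Type*} (S : YBSol X) : Prop :=
  ∀ x y z : X, S.σ (S.σ y x) = S.σ (S.σ z x)

/-- Indecomposability: the permutation group acts transitively. -/
def YBSol.Indec {X : Type*} (S : YBSol X) : Prop :=
  ∀ x y : X, ∃ g ∈ S.G, g x = y

section Aux

variable {X : Type*} (S : YBSol X)

private lemma YB_invol1 (x y : X) : S.σ (S.σ x y) (S.τ y x) = x :=
  congrArg Prod.fst (S.invol (x, y))

private lemma YB_braid1 (x y z : X) :
    S.σ (S.σ x y) (S.σ (S.τ y x) z) = S.σ x (S.σ y z) :=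
  congrArg Prod.fst (S.braid (x, y, z))

variable (h2 : S.MPL2)
include h2

private lemma YB_sig2 (a b : X) : S.σ (S.σ a b) = S.σ (S.σ b b) := h2 b a b

private lemma YB_tau (x y : X) : S.τ y x = (S.σ (S.σ y y))⁻¹ x := by
  have h := YB_invol1 S x y
  rw [YB_sig2 S h2 x y] at h
  have h' := congrArg (⇑(S.σ (S.σ y y))⁻¹) h
  simpa using h'

private lemma YB_mulC (x y : X) :
    S.σ x * S.σ y = S.σ (S.σ y y) * S.σ ((S.σ (S.σ y y))⁻¹ x) := by
  ext z
  have hb := YB_braid1 S x y z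
  rw [YB_sig2 S h2 x y, YB_tau S h2 x y] at hb
  simpa [Equiv.Perm.mul_apply] using hb.symm

private lemma YB_key1 (x y : X) :
    S.σ (S.σ x x) * S.σ y = S.σ (S.σ y y) * S.σ x := by
  have h := YB_mulC S h2 (S.σ (S.σ y y) x) y
  rw [YB_sig2 S h2 (S.σ y y) x, show ∀ (f : Equiv.Perm X) a, f⁻¹ (f a) = a from fun f a => f.symm_apply_apply a] at h
  exact h

private lemma YB_genq (x y : X) :
    S.σ x * (S.σ y)⁻¹ = (S.σ (S.σ y y))⁻¹ * S.σ (S.σ x x) := by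
  rw [mul_inv_eq_iff_eq_mul, mul_assoc, YB_key1 S h2 x y, inv_mul_cancel_left]

private lemma YB_qinv (x y : X) :
    S.σ (S.σ ((S.σ (S.σ y y))⁻¹ x) ((S.σ (S.σ y y))⁻¹ x)) = S.σ x := by
  have h := YB_sig2 S h2 (S.σ y y) ((S.σ (S.σ y y))⁻¹ x)
  rw [show ∀ (f : Equiv.Perm X) a, f (f⁻¹ a) = a from fun f a => f.apply_symm_apply a] at h
  exact h.symm

private lemma YB_kk (x y : X) :
    S.σ (S.σ (S.σ x x) (S.σ x x)) * S.σ (S.σ y y)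
      = S.σ (S.σ (S.σ y y) (S.σ y y)) * S.σ (S.σ x x) :=
  YB_key1 S h2 (S.σ x x) (S.σ y y)

private lemma YB_D1 (a b : X) :
    S.σ (S.σ a a) * (S.σ (S.σ b b))⁻¹
      = (S.σ (S.σ (S.σ b b) (S.σ b b)))⁻¹ * S.σ (S.σ (S.σ a a) (S.σ a a)) :=
  YB_genq S h2 (S.σ a a) (S.σ b b)

private lemma YB_gen_comm (x y c d : X) :
    (S.σ x * (S.σ y)⁻¹) * (S.σ c * (S.σ d)⁻¹)
      = (S.σ c * (S.σ d)⁻¹) * (S.σ x * (S.σ y)⁻¹) := by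
  rw [YB_genq S h2 x y, YB_genq S h2 c d]
  have e1 : ∀ w : Equiv.Perm X,
      S.σ (S.σ x x) * ((S.σ (S.σ d d))⁻¹ * w)
        = (S.σ (S.σ (S.σ d d) (S.σ d d)))⁻¹ * (S.σ (S.σ (S.σ x x) (S.σ x x)) * w) :=
    fun w => by rw [← mul_assoc, YB_D1 S h2 x d, mul_assoc]
  have e2 := YB_kk S h2 x c
  have h3 : (S.σ (S.σ y y))⁻¹ * (S.σ (S.σ (S.σ d d) (S.σ d d)))⁻¹
      = (S.σ (S.σ d d))⁻¹ * (S.σ (S.σ (S.σ y y) (S.σ y y)))⁻¹ := by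
    rw [← mul_inv_rev, ← mul_inv_rev, YB_kk S h2 d y]
  have e3 : ∀ w : Equiv.Perm X,
      (S.σ (S.σ y y))⁻¹ * ((S.σ (S.σ (S.σ d d) (S.σ d d)))⁻¹ * w)
        = (S.σ (S.σ d d))⁻¹ * ((S.σ (S.σ (S.σ y y) (S.σ y y)))⁻¹ * w) :=
    fun w => by rw [← mul_assoc, h3, mul_assoc]
  have e4 : ∀ w : Equiv.Perm X,
      (S.σ (S.σ (S.σ y y) (S.σ y y)))⁻¹ * (S.σ (S.σ (S.σ c c) (S.σ c c)) * w)
        = S.σ (S.σ c c) * ((S.σ (S.σ y y))⁻¹ * w) :=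
    fun w => by rw [← mul_assoc, ← YB_D1 S h2 c y, mul_assoc]
  simp only [mul_assoc]
  rw [e1, e2, e3, e4]

private lemma YB_conj_pos (z x y : X) :
    S.σ z * (S.σ x * (S.σ y)⁻¹) * (S.σ z)⁻¹
      = S.σ (S.σ x x) * (S.σ (S.σ y y))⁻¹ := by
  rw [YB_genq S h2 x y, YB_genq S h2 (S.σ x x) (S.σ y y)]
  have a1 : ∀ w : Equiv.Perm X,
      S.σ z * ((S.σ (S.σ y y))⁻¹ * w)
        = (S.σ (S.σ (S.σ y y) (S.σ y y)))⁻¹ * (S.σ (S.σ z z) * w) :=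
    fun w => by rw [← mul_assoc, YB_genq S h2 z (S.σ y y), mul_assoc]
  have a2 := YB_genq S h2 (S.σ x x) z
  simp only [mul_assoc]
  rw [a2, a1, mul_inv_cancel_left]

private lemma YB_conj_neg (z x y : X) :
    (S.σ z)⁻¹ * (S.σ x * (S.σ y)⁻¹) * S.σ z
      = S.σ ((S.σ (S.σ y y))⁻¹ x) * (S.σ ((S.σ (S.σ y y))⁻¹ y))⁻¹ := by
  rw [YB_genq S h2 x y,
      YB_genq S h2 ((S.σ (S.σ y y))⁻¹ x) ((S.σ (S.σ y y))⁻¹ y),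
      YB_qinv S h2 x y, YB_qinv S h2 y y]
  have a1 := YB_key1 S h2 x z
  have h3 : (S.σ z)⁻¹ * (S.σ (S.σ y y))⁻¹ = (S.σ y)⁻¹ * (S.σ (S.σ z z))⁻¹ := by
    rw [← mul_inv_rev, ← mul_inv_rev, YB_key1 S h2 y z]
  have a3 : ∀ w : Equiv.Perm X,
      (S.σ z)⁻¹ * ((S.σ (S.σ y y))⁻¹ * w)
        = (S.σ y)⁻¹ * ((S.σ (S.σ z z))⁻¹ * w) :=
    fun w => by rw [← mul_assoc, h3, mul_assoc]
  simp only [mul_assoc]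
  rw [a1, a3, inv_mul_cancel_left]

omit h2 in
private lemma YB_lift (g : Equiv.Perm X)
    (hgen : ∀ x y : X, g * (S.σ x * (S.σ y)⁻¹) * g⁻¹ ∈ S.Dis) :
    ∀ d ∈ S.Dis, g * d * g⁻¹ ∈ S.Dis := by
  intro d hd
  have hd' : d ∈ Subgroup.closure {g | ∃ x y : X, g = S.σ x * (S.σ y)⁻¹} := hd
  clear hd
  induction hd' using Subgroup.closure_induction with
  | mem t ht => obtain ⟨x, y, rfl⟩ := ht; exact hgen x y
  | one => simpa using one_mem S.Dis
  | mul u v hu hv pu pv =>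
    have h := mul_mem pu pv
    have h' : g * u * g⁻¹ * (g * v * g⁻¹) = g * (u * v) * g⁻¹ := by group
    rwa [h'] at h
  | inv u hu pu =>
    have h := inv_mem pu
    have h' : (g * u * g⁻¹)⁻¹ = g * u⁻¹ * g⁻¹ := by group
    rwa [h'] at h

end Aux

/-- For a solution of multipermutation level at most 2, the displacement group is an abelian
normal subgroup of the permutation group, and together with any single permutation `σ_e` it
generates the whole permutation group. -/
theorem dis_abelian_normal_and_generates {X : Type*} (S : YBSol X) (h2 : S.MPL2) :
    S.Dis ≤ S.G ∧
    (∀ g ∈ S.G, ∀ d ∈ S.Dis, g * d * g⁻¹ ∈ S.Dis) ∧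
    (∀ a ∈ S.Dis, ∀ b ∈ S.Dis, a * b = b * a) ∧
    (∀ e : X, S.G = Subgroup.closure ((S.Dis : Set (Equiv.Perm X)) ∪ {S.σ e})) := by
  have hDG : S.Dis ≤ S.G := by
    refine (Subgroup.closure_le _).mpr ?_
    rintro g ⟨x, y, rfl⟩
    exact mul_mem (Subgroup.subset_closure ⟨x, rfl⟩)
      (inv_mem (Subgroup.subset_closure ⟨y, rfl⟩))
  have hnorm : ∀ g ∈ S.G, ∀ d ∈ S.Dis, g * d * g⁻¹ ∈ S.Dis := by
    intro g hg
    have hg' : g ∈ Subgroup.closure (Set.range S.σ) := hg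
    clear hg
    have key : (∀ d ∈ S.Dis, g * d * g⁻¹ ∈ S.Dis)
        ∧ (∀ d ∈ S.Dis, g⁻¹ * d * g ∈ S.Dis) := by
      induction hg' using Subgroup.closure_induction with
      | mem t ht =>
        obtain ⟨z, rfl⟩ := ht
        constructor
        · refine YB_lift S (S.σ z) (fun x y => ?_)
          rw [YB_conj_pos S h2 z x y]
          exact Subgroup.subset_closure ⟨S.σ x x, S.σ y y, rfl⟩
        · have hl := YB_lift S (S.σ z)⁻¹ (fun x y => by
            rw [inv_inv, YB_conj_neg S h2 z x y]
            exact Subgroup.subset_closure ⟨(S.σ (S.σ y y))⁻¹ x, (S.σ (S.σ y y))⁻¹ y, rfl⟩)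
          intro d hd
          have := hl d hd
          rwa [inv_inv] at this
      | one => exact ⟨fun d hd => by simpa using hd, fun d hd => by simpa using hd⟩
      | mul u v hu hv pu pv =>
        constructor
        · intro d hd
          have h := pu.1 _ (pv.1 d hd)
          have h' : u * (v * d * v⁻¹) * u⁻¹ = u * v * d * (u * v)⁻¹ := by group
          rwa [h'] at h
        · intro d hd
          have h := pv.2 _ (pu.2 d hd)
          have h' : v⁻¹ * (u⁻¹ * d * u) * v = (u * v)⁻¹ * d * (u * v) := by group
          rwa [h'] at h
      | inv u hu pu =>
        refine ⟨fun d hd => pu.2 d hd, fun d hd => ?_⟩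
        have := pu.1 d hd
        rwa [← inv_inv u] at this
    exact key.1
  have hcomm : ∀ a ∈ S.Dis, ∀ b ∈ S.Dis, a * b = b * a := by
    have hgenb : ∀ x y : X, ∀ b ∈ S.Dis, Commute (S.σ x * (S.σ y)⁻¹) b := by
      intro x y b hb
      have hb' : b ∈ Subgroup.closure {g | ∃ x y : X, g = S.σ x * (S.σ y)⁻¹} := hb
      clear hb
      induction hb' using Subgroup.closure_induction with
      | mem t ht => obtain ⟨c, d, rfl⟩ := ht; exact YB_gen_comm S h2 x y c d
      | one => exact Commute.one_right _
      | mul u v hu hv pu pv => exact pu.mul_right pv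
      | inv u hu pu => exact pu.inv_right
    intro a ha
    have ha' : a ∈ Subgroup.closure {g | ∃ x y : X, g = S.σ x * (S.σ y)⁻¹} := ha
    clear ha
    induction ha' using Subgroup.closure_induction with
    | mem t ht =>
      obtain ⟨x, y, rfl⟩ := ht
      intro b hb
      exact hgenb x y b hb
    | one => intro b hb; simp
    | mul u v hu hv pu pv =>
      intro b hb
      exact Commute.mul_left (pu b hb) (pv b hb)
    | inv u hu pu =>
      intro b hb
      exact Commute.inv_left (pu b hb)
  refine ⟨hDG, hnorm, hcomm, ?_⟩
  intro e
  apply le_antisymm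
  · refine (Subgroup.closure_le _).mpr ?_
    rintro g ⟨x, rfl⟩
    have h1 : S.σ x * (S.σ e)⁻¹
        ∈ Subgroup.closure ((S.Dis : Set (Equiv.Perm X)) ∪ {S.σ e}) :=
      Subgroup.subset_closure (Or.inl (Subgroup.subset_closure ⟨x, e, rfl⟩))
    have he : S.σ e ∈ Subgroup.closure ((S.Dis : Set (Equiv.Perm X)) ∪ {S.σ e}) :=
      Subgroup.subset_closure (Or.inr rfl)
    simpa using mul_mem h1 he
  · refine (Subgroup.closure_le _).mpr ?_
    rintro g (hg | hg)
    · exact hDG hg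
    · rw [Set.mem_singleton_iff] at hg
      subst hg
      exact Subgroup.subset_closure ⟨e, rfl⟩
end

section
/- Let (X,σ,τ) be a non-degenerate involutive solution of the Yang–Baxter equation of multipermutation level at most 2, and fix e ∈ X. Then Dis(X) equals the set of products ∏ σ_{x_i}^{ε_i} (with ε_i ∈ {±1}) whose exponent sum ∑ ε_i is zero; in particular Dis(X) = ⟨σ_x σ_e⁻¹ : x ∈ X⟩. -/
section Aux
variable {X : Type*} (S : YBSol X)

lemma YB_star (x z : X) : S.σ (S.σ z x) * S.σ (S.τ x z) = S.σ z * S.σ x := by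
  ext w
  have h := congrArg Prod.fst (S.braid (z, x, w))
  simpa [r12P, r23P, rmapP] using h

lemma YB_tau_apply (x z : X) : S.τ x z = (S.σ (S.σ z x))⁻¹ z := by
  have h := congrArg Prod.fst (S.invol (z, x))
  simp only [rmapP] at h
  exact (Equiv.eq_symm_apply _).2 h

/-- identity (A): `σ_z σ_x = ρ_x σ_{ρ_x⁻¹ z}` with `ρ_x = σ_{σ_e x}`. -/
lemma YB_A (h2 : S.MPL2) (e z x : X) :
    S.σ z * S.σ x = S.σ (S.σ e x) * S.σ ((S.σ (S.σ e x))⁻¹ z) := by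
  have hs := YB_star S x z
  have hρ : S.σ (S.σ z x) = S.σ (S.σ e x) := h2 x z e
  have ht : S.τ x z = (S.σ (S.σ e x))⁻¹ z := by
    rw [YB_tau_apply, hρ]
  rw [← hs, hρ, ht]

/-- identity (A''): `σ_{ρ_x u} = ρ_x σ_u σ_x⁻¹`. -/
lemma YB_A'' (h2 : S.MPL2) (e x u : X) :
    S.σ (S.σ (S.σ e x) u) = S.σ (S.σ e x) * S.σ u * (S.σ x)⁻¹ := by
  have h := YB_A S h2 e (S.σ (S.σ e x) u) x
  simp only [show ∀ (f : Equiv.Perm X) y, f⁻¹ (f y) = y from fun f y => f.symm_apply_apply y] at h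
  rw [eq_comm, ← h]
  group

/-- conjugation by `σ_z` sends generators of `Dis` to generators. -/
lemma YB_conj_gen (h2 : S.MPL2) (z u v : X) :
    S.σ z * (S.σ u * (S.σ v)⁻¹) * (S.σ z)⁻¹ = S.σ (S.σ z u) * (S.σ (S.σ z v))⁻¹ := by
  have hu := YB_A'' S h2 z ((S.σ z)⁻¹ z) u
  have hv := YB_A'' S h2 z ((S.σ z)⁻¹ z) v
  simp only [show ∀ (f : Equiv.Perm X) y, f (f⁻¹ y) = y from fun f y => f.apply_symm_apply y] at hu hv
  rw [hu, hv]
  group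

lemma YB_conj_gen' (h2 : S.MPL2) (z u v : X) :
    (S.σ z)⁻¹ * (S.σ u * (S.σ v)⁻¹) * S.σ z = S.σ ((S.σ z)⁻¹ u) * (S.σ ((S.σ z)⁻¹ v))⁻¹ := by
  have h := YB_conj_gen S h2 z ((S.σ z)⁻¹ u) ((S.σ z)⁻¹ v)
  simp only [show ∀ (f : Equiv.Perm X) y, f (f⁻¹ y) = y from fun f y => f.apply_symm_apply y] at h
  rw [← h]
  group

lemma YB_conj_mem (h2 : S.MPL2) (z : X) {d : Equiv.Perm X} (hd : d ∈ S.Dis) :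
    S.σ z * d * (S.σ z)⁻¹ ∈ S.Dis := by
  induction hd using Subgroup.closure_induction with
  | mem g hg =>
      obtain ⟨u, v, rfl⟩ := hg
      rw [YB_conj_gen S h2]
      exact Subgroup.subset_closure ⟨_, _, rfl⟩
  | one => simpa using Subgroup.one_mem _
  | mul a b _ _ ha hb =>
      have : S.σ z * (a * b) * (S.σ z)⁻¹
          = (S.σ z * a * (S.σ z)⁻¹) * (S.σ z * b * (S.σ z)⁻¹) := by group
      rw [this]; exact Subgroup.mul_mem _ ha hb
  | inv a _ ha =>
      have : S.σ z * a⁻¹ * (S.σ z)⁻¹ = (S.σ z * a * (S.σ z)⁻¹)⁻¹ := by group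
      rw [this]; exact Subgroup.inv_mem _ ha

lemma YB_conj_mem' (h2 : S.MPL2) (z : X) {d : Equiv.Perm X} (hd : d ∈ S.Dis) :
    (S.σ z)⁻¹ * d * S.σ z ∈ S.Dis := by
  induction hd using Subgroup.closure_induction with
  | mem g hg =>
      obtain ⟨u, v, rfl⟩ := hg
      rw [YB_conj_gen' S h2]
      exact Subgroup.subset_closure ⟨_, _, rfl⟩
  | one => simpa using Subgroup.one_mem _
  | mul a b _ _ ha hb =>
      have : (S.σ z)⁻¹ * (a * b) * S.σ z
          = ((S.σ z)⁻¹ * a * S.σ z) * ((S.σ z)⁻¹ * b * S.σ z) := by group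
      rw [this]; exact Subgroup.mul_mem _ ha hb
  | inv a _ ha =>
      have : (S.σ z)⁻¹ * a⁻¹ * S.σ z = ((S.σ z)⁻¹ * a * S.σ z)⁻¹ := by group
      rw [this]; exact Subgroup.inv_mem _ ha

lemma YB_prod_mem (h2 : S.MPL2) (e : X) :
    ∀ l : List (X × ℤ), (∀ q ∈ l, q.2 = 1 ∨ q.2 = -1) →
      (l.map fun q => S.σ q.1 ^ q.2).prod * (S.σ e) ^ (-(l.map Prod.snd).sum) ∈ S.Dis := by
  intro l
  induction l with
  | nil => intro _; simpa using Subgroup.one_mem _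
  | cons q l ih =>
      intro hq
      obtain ⟨x, ε⟩ := q
      have hl := ih (fun p hp => hq p (List.mem_cons_of_mem _ hp))
      have hε := hq (x, ε) List.mem_cons_self
      simp only [List.map_cons, List.prod_cons, List.sum_cons] at *
      have key : (S.σ x ^ ε * (l.map fun q => S.σ q.1 ^ q.2).prod) *
            (S.σ e) ^ (-(ε + (l.map Prod.snd).sum))
          = (S.σ x ^ ε * (S.σ e) ^ (-ε)) *
            ((S.σ e) ^ ε *
              ((l.map fun q => S.σ q.1 ^ q.2).prod * (S.σ e) ^ (-(l.map Prod.snd).sum)) *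
              ((S.σ e) ^ ε)⁻¹) := by
        group
      rw [key]
      refine Subgroup.mul_mem _ ?_ ?_
      · rcases hε with h1 | h1 <;> subst h1
        · have : S.σ x ^ (1 : ℤ) * (S.σ e) ^ (-1 : ℤ) = S.σ x * (S.σ e)⁻¹ := by group
          rw [this]
          exact Subgroup.subset_closure ⟨x, e, rfl⟩
        · have : S.σ x ^ (-1 : ℤ) * (S.σ e) ^ (-(-1) : ℤ) =
              (S.σ x)⁻¹ * (S.σ e * (S.σ x)⁻¹) * S.σ x := by group
          rw [this]
          exact YB_conj_mem' S h2 x (Subgroup.subset_closure ⟨e, x, rfl⟩)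
      · rcases hε with h1 | h1 <;> subst h1
        · simpa [zpow_one] using YB_conj_mem S h2 e hl
        · have : (S.σ e) ^ (-1 : ℤ) = (S.σ e)⁻¹ := by group
          simp only [this]
          simpa using YB_conj_mem' S h2 e hl

end Aux

lemma neg_sum_aux {X : Type*} (l : List (X × ℤ)) :
    (l.map fun q : X × ℤ => -q.2).sum = -((l.map Prod.snd).sum) := by
  induction l with
  | nil => simp
  | cons p l ih => simp only [List.map_cons, List.sum_cons, ih]; ring

/-- For a solution of multipermutation level at most 2, the displacement group consists exactly
of the products `∏ σ_{x_i}^{ε_i}` with `ε_i ∈ {±1}` and exponent sum zero; in particular it is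
generated by the elements `σ_x σ_e⁻¹` for any fixed `e`. -/
theorem dis_eq_zero_sum_products {X : Type*} (S : YBSol X) (h2 : S.MPL2) (e : X) :
    (S.Dis : Set (Equiv.Perm X)) =
      {g | ∃ l : List (X × ℤ), (∀ q ∈ l, q.2 = 1 ∨ q.2 = -1) ∧
        (l.map Prod.snd).sum = 0 ∧ g = (l.map fun q => S.σ q.1 ^ q.2).prod} ∧
    S.Dis = Subgroup.closure {g | ∃ x : X, g = S.σ x * (S.σ e)⁻¹} := by
  constructor
  · ext g
    simp only [SetLike.mem_coe, Set.mem_setOf_eq]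
    constructor
    · intro hg
      induction hg using Subgroup.closure_induction with
      | mem g hg =>
          obtain ⟨x, y, rfl⟩ := hg
          refine ⟨[(x, 1), (y, -1)], ?_, ?_, ?_⟩
          · intro q hq
            simp only [List.mem_cons, List.not_mem_nil, or_false] at hq
            rcases hq with rfl | rfl
            · exact Or.inl rfl
            · exact Or.inr rfl
          · simp
          · simp [zpow_one]
      | one => exact ⟨[], by simp, by simp, by simp⟩
      | mul a b _ _ ha hb =>
          obtain ⟨l1, hl1, hs1, rfl⟩ := ha
          obtain ⟨l2, hl2, hs2, rfl⟩ := hb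
          refine ⟨l1 ++ l2, ?_, ?_, ?_⟩
          · intro q hq
            rcases List.mem_append.1 hq with h | h
            · exact hl1 q h
            · exact hl2 q h
          · simp [hs1, hs2]
          · simp
      | inv a _ ha =>
          obtain ⟨l, hl, hs, rfl⟩ := ha
          refine ⟨l.reverse.map fun q => (q.1, -q.2), ?_, ?_, ?_⟩
          · intro q hq
            obtain ⟨p, hp, rfl⟩ := List.mem_map.1 hq
            rcases hl p (List.mem_reverse.1 hp) with h | h
            · exact Or.inr (by simp [h])
            · exact Or.inl (by simp [h])
          · simp only [List.map_map, List.map_reverse, List.sum_reverse]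
            have : (Prod.snd ∘ fun q : X × ℤ => (q.1, -q.2)) = fun q : X × ℤ => -q.2 := rfl
            rw [this]
            rw [neg_sum_aux, hs, neg_zero]
          · rw [List.prod_inv_reverse]
            simp only [List.map_map, List.map_reverse]
            congr 1
            congr 1
            ext q
            simp [zpow_neg]
    · rintro ⟨l, hl, hs, rfl⟩
      have := YB_prod_mem S h2 e l hl
      rw [hs] at this
      simpa using this
  · refine le_antisymm ?_ ?_
    · rw [YBSol.Dis]
      refine Subgroup.closure_le _ |>.2 ?_
      rintro g ⟨x, y, rfl⟩
      have hx : S.σ x * (S.σ e)⁻¹ ∈ Subgroup.closure {g | ∃ x : X, g = S.σ x * (S.σ e)⁻¹} :=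
        Subgroup.subset_closure ⟨x, rfl⟩
      have hy : S.σ y * (S.σ e)⁻¹ ∈ Subgroup.closure {g | ∃ x : X, g = S.σ x * (S.σ e)⁻¹} :=
        Subgroup.subset_closure ⟨y, rfl⟩
      have : S.σ x * (S.σ y)⁻¹ = (S.σ x * (S.σ e)⁻¹) * (S.σ y * (S.σ e)⁻¹)⁻¹ := by group
      rw [this]
      exact Subgroup.mul_mem _ hx (Subgroup.inv_mem _ hy)
    · refine Subgroup.closure_le _ |>.2 ?_
      rintro g ⟨x, rfl⟩
      exact Subgroup.subset_closure ⟨x, e, rfl⟩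
end

section
/- Let (X,σ,τ) be an indecomposable non-degenerate involutive solution of the Yang–Baxter equation of multipermutation level at most 2. Then the permutation group G(X) is generated by two elements; more precisely, fixing e ∈ X, G(X) = ⟨σ_e, σ_{σ_e(e)}⟩. -/
/-- The permutation group of an indecomposable solution of multipermutation level at most 2
is generated by two elements: for any `e`, by `σ_e` and `σ_{σ_e(e)}`. -/
theorem permGroup_two_generated {X : Type*} (S : YBSol X) (hind : S.Indec) (h2 : S.MPL2)
    (e : X) :
    S.G = Subgroup.closure {S.σ e, S.σ (S.σ e e)} := by
  set q : X → Equiv.Perm X := fun z => S.σ (S.σ e z) with hqdef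
  have h2' : ∀ y z : X, S.σ (S.σ y z) = q z := fun y z => h2 z y e
  have braid1 : ∀ a b : X, S.σ (S.σ a b) * S.σ (S.τ b a) = S.σ a * S.σ b := by
    intro a b
    ext z
    have h := congrArg (fun t : X × X × X => t.1) (S.braid (a, b, z))
    simpa [r12P, r23P] using h
  have inv1 : ∀ a b : X, S.σ (S.σ a b) (S.τ b a) = a := by
    intro a b
    have h := congrArg (fun t : X × X => t.1) (S.invol (a, b))
    simpa [rmapP] using h
  have htau : ∀ a b : X, S.τ b a = (q b)⁻¹ a := by
    intro a b
    have h := inv1 a b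
    rw [h2' a b] at h
    calc S.τ b a = (q b)⁻¹ (q b (S.τ b a)) := by simp
    _ = (q b)⁻¹ a := by rw [h]
  have stepA' : ∀ a b : X, q b * S.σ ((q b)⁻¹ a) = S.σ a * S.σ b := by
    intro a b
    have h := braid1 a b
    rwa [h2' a b, htau a b] at h
  have stepA : ∀ b z : X, S.σ (q b z) = q b * S.σ z * (S.σ b)⁻¹ := by
    intro b z
    have h := stepA' (q b z) b
    simp only [Equiv.Perm.coe_inv, Equiv.symm_apply_apply] at h
    rw [h]
    group
  have stepB : ∀ x y : X, q (S.σ y x) = q y * q x * (S.σ y)⁻¹ := by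
    intro x y
    have hpt : q y (S.σ e x) = S.σ (q y e) (S.σ y x) := by
      have h := congrArg (fun g : Equiv.Perm X => g x) (stepA' (q y e) y)
      simpa using h
    calc q (S.σ y x) = S.σ (S.σ (q y e) (S.σ y x)) := (h2' (q y e) (S.σ y x)).symm
    _ = S.σ (q y (S.σ e x)) := by rw [hpt]
    _ = q y * S.σ (S.σ e x) * (S.σ y)⁻¹ := stepA y (S.σ e x)
    _ = q y * q x * (S.σ y)⁻¹ := by rw [h2' e x]
  have step7 : ∀ x y : X, q ((S.σ y)⁻¹ x) = S.σ x := by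
    intro x y
    have h := h2' y ((S.σ y)⁻¹ x)
    rw [show S.σ y ((S.σ y)⁻¹ x) = x from Equiv.apply_symm_apply _ x] at h
    exact h.symm
  have key : ∀ x : X, q x = q e * S.σ x * (S.σ e)⁻¹ := by
    intro x
    have h := stepB ((S.σ e)⁻¹ x) e
    rw [show S.σ e ((S.σ e)⁻¹ x) = x from Equiv.apply_symm_apply _ x, step7 x e] at h
    exact h
  have keyH : ∀ x y : X, S.σ (S.σ y x) = S.σ (S.σ e e) * S.σ x * (S.σ e)⁻¹ := by
    intro x y
    rw [h2' y x, key x]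
  set H := Subgroup.closure {S.σ e, S.σ (S.σ e e)} with hH
  have hσe : S.σ e ∈ H := Subgroup.subset_closure (by left; rfl)
  have hqe : S.σ (S.σ e e) ∈ H := Subgroup.subset_closure (by right; rfl)
  apply le_antisymm
  · rw [YBSol.G]
    apply Subgroup.closure_le _ |>.mpr
    rintro _ ⟨x, rfl⟩
    have claim : ∀ g ∈ S.G, ∀ z : X, (S.σ z ∈ H ↔ S.σ (g z) ∈ H) := by
      intro g hg
      refine Subgroup.closure_induction ?_ ?_ ?_ ?_ hg
      · rintro _ ⟨y, rfl⟩ z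
        rw [keyH z y]
        constructor
        · intro hz
          exact H.mul_mem (H.mul_mem hqe hz) (H.inv_mem hσe)
        · intro hz
          have : S.σ z = (S.σ (S.σ e e))⁻¹ * (S.σ (S.σ e e) * S.σ z * (S.σ e)⁻¹) * S.σ e := by
            group
          rw [this]
          exact H.mul_mem (H.mul_mem (H.inv_mem hqe) hz) hσe
      · intro z; simp
      · intro a b _ _ ha hb z
        rw [show (a * b) z = a (b z) from rfl]
        exact (hb z).trans (ha (b z))
      · intro a _ ha z
        have := ha (a⁻¹ z)
        rw [show a (a⁻¹ z) = z from Equiv.apply_symm_apply a z] at this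
        exact this.symm
    obtain ⟨g, hg, hge⟩ := hind e x
    have := (claim g hg e).mp hσe
    rwa [hge] at this
  · apply Subgroup.closure_le _ |>.mpr
    rintro g (rfl | rfl)
    · exact Subgroup.subset_closure ⟨e, rfl⟩
    · exact Subgroup.subset_closure ⟨S.σ e e, rfl⟩
end

section
/- Let (X,σ,τ) be a finite indecomposable non-degenerate involutive solution of the Yang–Baxter equation of multipermutation level at most 2. Then all permutations σ_x, for x ∈ X, have the same order in Sym(X). -/
namespace YBAux

variable {X : Type*} (S : YBSol X)

lemma inv1 (x y : X) : S.σ (S.σ x y) (S.τ y x) = x := by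
  have h := S.invol (x, y)
  simp only [rmapP, Prod.ext_iff] at h
  exact h.1

lemma braid1 (x y z : X) :
    S.σ (S.σ x y) (S.σ (S.τ y x) z) = S.σ x (S.σ y z) := by
  have h := S.braid (x, y, z)
  simp only [r12P, r23P, Prod.ext_iff] at h
  exact h.1

lemma braid1' (x y : X) :
    S.σ (S.σ x y) * S.σ (S.τ y x) = S.σ x * S.σ y :=
  Equiv.ext fun z => braid1 S x y z

lemma tau_eq (h2 : S.MPL2) (y x : X) : S.τ y x = (S.σ (S.σ y y))⁻¹ x := by
  have h := inv1 S x y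
  rw [h2 y x y] at h
  exact (Equiv.Perm.eq_inv_iff_eq).mpr h

lemma lemD (h2 : S.MPL2) (u y : X) :
    S.σ (S.σ u u) = S.σ (S.σ y y) * S.σ u * (S.σ y)⁻¹ := by
  have hb := braid1' S (S.σ (S.σ y y) u) y
  rw [h2 y (S.σ (S.σ y y) u) y] at hb
  have ht : S.τ y (S.σ (S.σ y y) u) = u := by
    rw [tau_eq S h2, Equiv.Perm.inv_def, Equiv.symm_apply_apply]
  rw [ht] at hb
  have hTu : S.σ (S.σ (S.σ y y) u) = S.σ (S.σ u u) := h2 u (S.σ y y) u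
  rw [hTu] at hb
  rw [hb]
  group

lemma powT (h2 : S.MPL2) (x : X) (k : ℕ) :
    S.σ ((S.σ x ^ k) x) = (S.σ (S.σ x x)) ^ k * S.σ x * ((S.σ x)⁻¹) ^ k := by
  induction k with
  | zero => simp
  | succ k ih =>
    have hstep : (S.σ x ^ (k + 1)) x = S.σ x ((S.σ x ^ k) x) := by
      rw [pow_succ']; rfl
    rw [hstep, h2 ((S.σ x ^ k) x) x ((S.σ x ^ k) x),
      lemD S h2 ((S.σ x ^ k) x) x, ih]
    group

lemma Tn (h2 : S.MPL2) (x : X) :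
    (S.σ (S.σ x x)) ^ orderOf (S.σ x) = 1 := by
  have h := powT S h2 x (orderOf (S.σ x))
  rw [inv_pow, pow_orderOf_eq_one] at h
  simp only [inv_one, mul_one, Equiv.Perm.one_apply] at h
  have h' : (S.σ (S.σ x x)) ^ orderOf (S.σ x) * S.σ x = 1 * S.σ x := by
    rw [← h, one_mul]
  exact mul_right_cancel h'

/-- iterated points -/
def pSeq (x : X) : ℕ → X
  | 0 => x
  | k + 1 => S.σ (pSeq x k) (pSeq x k)

lemma sdvd (h2 : S.MPL2) (x : X) (k : ℕ) :
    orderOf (S.σ (pSeq S x (k + 1))) ∣ orderOf (S.σ (pSeq S x k)) :=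
  orderOf_dvd_of_pow_eq_one (Tn S h2 (pSeq S x k))

lemma sdvd_le (h2 : S.MPL2) (x : X) {i j : ℕ} (hij : i ≤ j) :
    orderOf (S.σ (pSeq S x j)) ∣ orderOf (S.σ (pSeq S x i)) := by
  induction j, hij using Nat.le_induction with
  | base => exact dvd_rfl
  | succ j hij ih => exact dvd_trans (sdvd S h2 x j) ih

lemma srec (h2 : S.MPL2) (x : X) (k : ℕ) :
    S.σ (pSeq S x (k + 2)) =
      (S.σ (pSeq S x (k + 1))) ^ 2 * (S.σ (pSeq S x k))⁻¹ := by
  have h := lemD S h2 (pSeq S x (k + 1)) (pSeq S x k)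
  have h1 : S.σ (pSeq S x (k + 1)) = S.σ (S.σ (pSeq S x k) (pSeq S x k)) := rfl
  have h2' : S.σ (pSeq S x (k + 2)) =
      S.σ (S.σ (pSeq S x (k + 1)) (pSeq S x (k + 1))) := rfl
  rw [h2', h, ← h1, sq]

lemma keyLemma [Finite X] (h2 : S.MPL2) (x : X) :
    orderOf (S.σ (S.σ x x)) = orderOf (S.σ x) := by
  set q : ℕ → Equiv.Perm X × Equiv.Perm X :=
    fun k => (S.σ (pSeq S x k), S.σ (pSeq S x (k + 1))) with hq
  set F : Equiv.Perm X × Equiv.Perm X → Equiv.Perm X × Equiv.Perm X :=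
    fun ab => (ab.2, ab.2 ^ 2 * ab.1⁻¹) with hF
  have hFinj : Function.Injective F := by
    intro a b hab
    simp only [hF, Prod.ext_iff] at hab
    obtain ⟨h1, h22⟩ := hab
    rw [h1] at h22
    have := mul_left_cancel h22
    exact Prod.ext (inv_injective this) h1
  have hstep : ∀ k, q (k + 1) = F (q k) := by
    intro k
    simp only [hq, hF]
    exact Prod.ext_iff.mpr ⟨rfl, srec S h2 x k⟩
  have hiter : ∀ k, q k = F^[k] (q 0) := by
    intro k
    induction k with
    | zero => rfl
    | succ k ih => rw [hstep k, ih, Function.iterate_succ_apply']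
  obtain ⟨k, l, hkl, hq'⟩ := Finite.exists_ne_map_eq_of_infinite q
  wlog hlt : k < l generalizing k l
  · exact this l k (Ne.symm hkl) hq'.symm (by omega)
  have hm : q 0 = q (l - k) := by
    have h1 : F^[k] (q 0) = F^[k] (q (l - k)) := by
      rw [hiter (l - k), ← Function.iterate_add_apply]
      have hk : k + (l - k) = l := by omega
      rw [hk, ← hiter, ← hiter]
      exact hq'
    exact hFinj.iterate k h1
  have hm1 : 1 ≤ l - k := by omega
  have d1 : orderOf (S.σ (pSeq S x 1)) ∣ orderOf (S.σ (pSeq S x 0)) :=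
    sdvd S h2 x 0
  have d2 : orderOf (S.σ (pSeq S x (l - k))) ∣ orderOf (S.σ (pSeq S x 1)) :=
    sdvd_le S h2 x hm1
  have he : S.σ (pSeq S x 0) = S.σ (pSeq S x (l - k)) :=
    congrArg Prod.fst hm
  have : orderOf (S.σ (pSeq S x 0)) = orderOf (S.σ (pSeq S x 1)) := by
    refine Nat.dvd_antisymm ?_ d1
    rw [he]
    exact d2
  exact this.symm

end YBAux

/-- In a finite indecomposable solution of multipermutation level at most 2, all the
permutations `σ_x` have the same order. -/
theorem sigma_same_order {X : Type*} [Finite X] (S : YBSol X) (hind : S.Indec)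
    (h2 : S.MPL2) :
    ∀ x y : X, orderOf (S.σ x) = orderOf (S.σ y) := by
  have key : ∀ g ∈ S.G, ∀ x : X, orderOf (S.σ (g x)) = orderOf (S.σ x) := by
    intro g hg
    refine Subgroup.closure_induction ?_ ?_ ?_ ?_ hg
    · rintro g ⟨z, rfl⟩ x
      rw [h2 x z x]
      exact YBAux.keyLemma S h2 x
    · intro x
      simp
    · intro a b ha hb pa pb x
      have hab : (a * b) x = a (b x) := rfl
      rw [hab, pa (b x), pb x]
    · intro a ha pa x
      have h := pa (a⁻¹ x)
      rw [Equiv.Perm.inv_def, Equiv.apply_symm_apply] at h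
      exact h.symm
  intro x y
  obtain ⟨g, hg, rfl⟩ := hind x y
  exact (key g hg x).symm
end

section
/- Let (X,σ,τ) and (Y,ρ,υ) be indecomposable non-degenerate involutive solutions of the Yang–Baxter equation of multipermutation level at most 2, and let Φ₁, Φ₂ : X → Y be homomorphisms of solutions (Φ ∘ σ_x = ρ_{Φ(x)} ∘ Φ for all x). If Φ₁(e) = Φ₂(e) for some e ∈ X, then Φ₁ = Φ₂. -/
theorem Equiv.Perm.apply_inv_self {α : Type*} (f : Equiv.Perm α) (x : α) : f (f⁻¹ x) = x :=
  Equiv.apply_symm_apply f x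

theorem Equiv.Perm.inv_apply_self {α : Type*} (f : Equiv.Perm α) (x : α) : f⁻¹ (f x) = x :=
  Equiv.symm_apply_apply f x

section Aux

variable {Y : Type*} (T : YBSol Y)

lemma YB_invol1_s5 (x y : Y) : T.σ (T.σ x y) (T.τ y x) = x :=
  congrArg Prod.fst (T.invol (x, y))

lemma YB_tau_s5 (x y : Y) : T.τ y x = (T.σ (T.σ x y))⁻¹ x := by
  apply (T.σ (T.σ x y)).injective
  rw [Equiv.Perm.apply_inv_self]
  exact YB_invol1_s5 T x y

lemma YB_braid1_s5 (x y z : Y) :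
    T.σ (T.σ x y) (T.σ (T.τ y x) z) = T.σ x (T.σ y z) :=
  congrArg Prod.fst (T.braid (x, y, z))

/-- The key identity `σ_a ∘ σ_{σ_u⁻¹ p} = σ_p ∘ σ_{σ_p⁻¹ a}`. -/
lemma YB_lemA (h2 : T.MPL2) (a u p : Y) :
    T.σ a * T.σ ((T.σ u)⁻¹ p) = T.σ p * T.σ ((T.σ p)⁻¹ a) := by
  set y := (T.σ u)⁻¹ p with hy
  have hp : T.σ u y = p := Equiv.Perm.apply_inv_self _ _
  have h1 : T.σ (T.σ a y) = T.σ p := by rw [h2 y a u, hp]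
  have htau : T.τ y a = (T.σ p)⁻¹ a := by rw [YB_tau_s5 T a y, h1]
  ext w
  have hb := YB_braid1_s5 T a y w
  rw [htau, h1] at hb
  simp only [Equiv.Perm.mul_apply]
  exact hb.symm

/-- `σ_{σ_z (σ_v⁻¹ b)} = σ_b`. -/
lemma YB_lam (h2 : T.MPL2) (v b z : Y) : T.σ (T.σ z ((T.σ v)⁻¹ b)) = T.σ b := by
  rw [h2 ((T.σ v)⁻¹ b) z v, Equiv.Perm.apply_inv_self]

/-- `σ_{σ_a⁻¹ c}` does not depend on `a`. -/
lemma YB_F (h2 : T.MPL2) (a c : Y) : T.σ ((T.σ a)⁻¹ c) = T.σ (T.τ c c) := by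
  set p := T.σ c c with hpdef
  set q := T.τ c c with hqdef
  have hc : T.σ p q = c := YB_invol1_s5 T c c
  have hA := YB_lemA T h2 p c a
  have key : (T.σ a)⁻¹ c = T.σ ((T.σ a)⁻¹ p) ((T.σ ((T.σ c)⁻¹ a))⁻¹ q) := by
    have h := Equiv.ext_iff.mp hA ((T.σ ((T.σ c)⁻¹ a))⁻¹ q)
    simp only [Equiv.Perm.mul_apply, Equiv.Perm.apply_inv_self] at h
    rw [hc] at h
    conv_lhs => rw [h]
    rw [Equiv.Perm.inv_apply_self]
  rw [key]
  exact YB_lam T h2 ((T.σ c)⁻¹ a) q ((T.σ a)⁻¹ p)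

/-- Conjugation of a displacement generator by `σ_c`. -/
lemma YB_conj_up (h2 : T.MPL2) (c x y : Y) :
    T.σ c * (T.σ x * (T.σ y)⁻¹) * (T.σ c)⁻¹
      = T.σ (T.σ x x) * (T.σ (T.σ y y))⁻¹ := by
  have hx := YB_lemA T h2 c x (T.σ x x)
  rw [Equiv.Perm.inv_apply_self] at hx
  have hy := YB_lemA T h2 c y (T.σ y y)
  rw [Equiv.Perm.inv_apply_self] at hy
  have hF : T.σ ((T.σ (T.σ x x))⁻¹ c) = T.σ ((T.σ (T.σ y y))⁻¹ c) := by
    rw [YB_F T h2, YB_F T h2]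
  have step : T.σ c * (T.σ x * (T.σ y)⁻¹) * (T.σ c)⁻¹
      = (T.σ c * T.σ x) * (T.σ c * T.σ y)⁻¹ := by group
  rw [step, hx, hy, hF]
  group

/-- Conjugation of a displacement generator by `σ_c⁻¹`. -/
lemma YB_conj_down (h2 : T.MPL2) (c x y : Y) :
    (T.σ c)⁻¹ * (T.σ x * (T.σ y)⁻¹) * T.σ c
      = T.σ ((T.σ c)⁻¹ x) * (T.σ ((T.σ c)⁻¹ y))⁻¹ := by
  have hx := YB_lemA T h2 x c c
  have hy := YB_lemA T h2 y c c
  have key : T.σ c * (T.σ ((T.σ c)⁻¹ x) * (T.σ ((T.σ c)⁻¹ y))⁻¹) * (T.σ c)⁻¹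
      = T.σ x * (T.σ y)⁻¹ := by
    have e : T.σ c * (T.σ ((T.σ c)⁻¹ x) * (T.σ ((T.σ c)⁻¹ y))⁻¹) * (T.σ c)⁻¹
        = (T.σ c * T.σ ((T.σ c)⁻¹ x)) * (T.σ c * T.σ ((T.σ c)⁻¹ y))⁻¹ := by group
    rw [e, ← hx, ← hy]
    group
  rw [← key]
  group

/-- `Dis` is normalized by every `σ_c` (both directions). -/
lemma YB_dis_conj (h2 : T.MPL2) (c : Y) {d : Equiv.Perm Y} (hd : d ∈ T.Dis) :
    T.σ c * d * (T.σ c)⁻¹ ∈ T.Dis ∧ (T.σ c)⁻¹ * d * T.σ c ∈ T.Dis := by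
  induction hd using Subgroup.closure_induction with
  | mem g hg =>
    obtain ⟨x, y, rfl⟩ := hg
    constructor
    · rw [YB_conj_up T h2]
      exact Subgroup.subset_closure ⟨_, _, rfl⟩
    · rw [YB_conj_down T h2]
      exact Subgroup.subset_closure ⟨_, _, rfl⟩
  | one =>
    have e1 : T.σ c * 1 * (T.σ c)⁻¹ = (1 : Equiv.Perm Y) := by group
    have e2 : (T.σ c)⁻¹ * 1 * T.σ c = (1 : Equiv.Perm Y) := by group
    exact ⟨by rw [e1]; exact one_mem _, by rw [e2]; exact one_mem _⟩
  | mul a b ha hb iha ihb =>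
    constructor
    · have e : T.σ c * (a * b) * (T.σ c)⁻¹
          = (T.σ c * a * (T.σ c)⁻¹) * (T.σ c * b * (T.σ c)⁻¹) := by group
      rw [e]; exact mul_mem iha.1 ihb.1
    · have e : (T.σ c)⁻¹ * (a * b) * T.σ c
          = ((T.σ c)⁻¹ * a * T.σ c) * ((T.σ c)⁻¹ * b * T.σ c) := by group
      rw [e]; exact mul_mem iha.2 ihb.2
  | inv a ha iha =>
    constructor
    · have e : T.σ c * a⁻¹ * (T.σ c)⁻¹ = (T.σ c * a * (T.σ c)⁻¹)⁻¹ := by group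
      rw [e]; exact inv_mem iha.1
    · have e : (T.σ c)⁻¹ * a⁻¹ * T.σ c = ((T.σ c)⁻¹ * a * T.σ c)⁻¹ := by group
      rw [e]; exact inv_mem iha.2

/-- `σ` is invariant under the displacement group. -/
lemma YB_dis_inv (h2 : T.MPL2) {d : Equiv.Perm Y} (hd : d ∈ T.Dis) :
    ∀ b : Y, T.σ (d b) = T.σ b := by
  induction hd using Subgroup.closure_induction with
  | mem g hg =>
    obtain ⟨x, y, rfl⟩ := hg
    intro b
    have e : (T.σ x * (T.σ y)⁻¹) b = T.σ x ((T.σ y)⁻¹ b) := rfl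
    rw [e, h2 ((T.σ y)⁻¹ b) x y, Equiv.Perm.apply_inv_self]
  | one => intro b; rfl
  | mul a b' ha hb iha ihb =>
    intro b
    have e : (a * b') b = a (b' b) := rfl
    rw [e, iha, ihb]
  | inv a ha iha =>
    intro b
    have := iha (a⁻¹ b)
    rw [Equiv.Perm.apply_inv_self] at this
    exact this.symm

end Aux

section Reach

/-- Predicates stable under all `σ_z` and `σ_z⁻¹` and holding at a point hold everywhere,
for an indecomposable solution. -/
lemma YB_reach {X : Type*} (S : YBSol X) (hSi : S.Indec) (P : X → Prop)
    (hstep : ∀ z x, P x → P (S.σ z x))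
    (hstep' : ∀ z x, P x → P ((S.σ z)⁻¹ x))
    (e : X) (hPe : P e) : ∀ x, P x := by
  intro x
  obtain ⟨g, hg, hgx⟩ := hSi e x
  suffices h : ∀ g' ∈ S.G, (∀ w, P w → P (g' w)) ∧ (∀ w, P w → P (g'⁻¹ w)) by
    rw [← hgx]
    exact (h g hg).1 e hPe
  intro g' hg'
  induction hg' using Subgroup.closure_induction with
  | mem f hf =>
    obtain ⟨z, rfl⟩ := hf
    exact ⟨fun w hw => hstep z w hw, fun w hw => hstep' z w hw⟩
  | one => exact ⟨fun w hw => hw, fun w hw => by simpa using hw⟩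
  | mul a b ha hb iha ihb =>
    constructor
    · intro w hw
      have e1 : (a * b) w = a (b w) := rfl
      rw [e1]; exact iha.1 _ (ihb.1 _ hw)
    · intro w hw
      have e1 : (a * b)⁻¹ w = b⁻¹ (a⁻¹ w) := by
        rw [mul_inv_rev]; rfl
      rw [e1]; exact ihb.2 _ (iha.2 _ hw)
  | inv a ha iha =>
    exact ⟨fun w hw => iha.2 w hw, fun w hw => by simpa using iha.1 w hw⟩

end Reach

/-- A homomorphism also intertwines the inverses of the `σ`'s. -/
lemma YB_hom_inv {X Y : Type*} (S : YBSol X) (T : YBSol Y) (Φ : X → Y)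
    (hh : ∀ x y : X, Φ (S.σ x y) = T.σ (Φ x) (Φ y)) (z x : X) :
    Φ ((S.σ z)⁻¹ x) = (T.σ (Φ z))⁻¹ (Φ x) := by
  have h := hh z ((S.σ z)⁻¹ x)
  rw [Equiv.Perm.apply_inv_self] at h
  rw [h, Equiv.Perm.inv_apply_self]

/-- Two homomorphisms between indecomposable solutions of multipermutation level at most 2
agreeing at one point are equal. -/
theorem hom_eq_of_agree {X Y : Type*} (S : YBSol X) (T : YBSol Y)
    (hSi : S.Indec) (hS2 : S.MPL2) (hTi : T.Indec) (hT2 : T.MPL2)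
    (Φ₁ Φ₂ : X → Y)
    (hh1 : ∀ x y : X, Φ₁ (S.σ x y) = T.σ (Φ₁ x) (Φ₁ y))
    (hh2 : ∀ x y : X, Φ₂ (S.σ x y) = T.σ (Φ₂ x) (Φ₂ y))
    (e : X) (he : Φ₁ e = Φ₂ e) : Φ₁ = Φ₂ := by
  -- Step 1: Φ₂ x ∈ Dis(T) · Φ₁ x for every x.
  set D : X → Prop := fun x => ∃ d ∈ T.Dis, Φ₂ x = d (Φ₁ x) with hD
  have hDall : ∀ x, D x := by
    apply YB_reach S hSi D ?_ ?_ e ⟨1, one_mem _, by simp [he]⟩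
    · rintro z x ⟨d, hd, hx⟩
      refine ⟨T.σ (Φ₂ z) * d * (T.σ (Φ₁ z))⁻¹, ?_, ?_⟩
      · have e1 : T.σ (Φ₂ z) * d * (T.σ (Φ₁ z))⁻¹
            = (T.σ (Φ₂ z) * (T.σ (Φ₁ z))⁻¹) * (T.σ (Φ₁ z) * d * (T.σ (Φ₁ z))⁻¹) := by group
        rw [e1]
        exact mul_mem (Subgroup.subset_closure ⟨Φ₂ z, Φ₁ z, rfl⟩)
          (YB_dis_conj T hT2 (Φ₁ z) hd).1
      · rw [hh2 z x, hh1 z x, hx]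
        simp only [Equiv.Perm.mul_apply, Equiv.Perm.inv_apply_self, Equiv.Perm.apply_inv_self]
    · rintro z x ⟨d, hd, hx⟩
      refine ⟨(T.σ (Φ₂ z))⁻¹ * d * T.σ (Φ₁ z), ?_, ?_⟩
      · have e1 : (T.σ (Φ₂ z))⁻¹ * d * T.σ (Φ₁ z)
            = ((T.σ (Φ₂ z))⁻¹ * d * T.σ (Φ₂ z))
              * ((T.σ (Φ₂ z))⁻¹ * (T.σ (Φ₁ z) * (T.σ (Φ₂ z))⁻¹) * T.σ (Φ₂ z)) := by
          group
        rw [e1]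
        exact mul_mem (YB_dis_conj T hT2 (Φ₂ z) hd).2
          (YB_dis_conj T hT2 (Φ₂ z) (Subgroup.subset_closure ⟨Φ₁ z, Φ₂ z, rfl⟩)).2
      · rw [YB_hom_inv S T Φ₂ hh2 z x, YB_hom_inv S T Φ₁ hh1 z x, hx]
        simp only [Equiv.Perm.mul_apply, Equiv.Perm.inv_apply_self, Equiv.Perm.apply_inv_self]
  -- Step 2: σ ∘ Φ₁ = σ ∘ Φ₂.
  have crux : ∀ z, T.σ (Φ₂ z) = T.σ (Φ₁ z) := by
    intro z
    obtain ⟨d, hd, hz⟩ := hDall z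
    rw [hz, YB_dis_inv T hT2 hd]
  -- Step 3: propagate pointwise equality.
  have hall : ∀ x, Φ₁ x = Φ₂ x := by
    apply YB_reach S hSi (fun x => Φ₁ x = Φ₂ x) ?_ ?_ e he
    · intro z x hx
      rw [hh1 z x, hh2 z x, crux z, hx]
    · intro z x hx
      rw [YB_hom_inv S T Φ₁ hh1 z x, YB_hom_inv S T Φ₂ hh2 z x, crux z, hx]
  funext x
  exact hall x
end

section
/- Let n ∈ ℕ (n ≥ 1), let (G,+,0) be an abelian group, and let c : ℤ/nℤ → G satisfy c(0) = 0 and G = ⟨c(i) : i ∈ ℤ/nℤ⟩. Define on X = G × ℤ/nℤ the maps σ_{(a,i)}(b,j) = (b + c(i−j−1) − c(−j−1), j+1) and τ_{(a,i)}(b,j) = (b − c(i−j+1) + c(−j), j−1). Then (X,σ,τ) is a non-degenerate involutive set-theoretic solution of the Yang–Baxter equation. -/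
/-- The map `r(x,y) = (σ_x(y), τ_y(x))` associated to a set-theoretic solution. -/
def rmapF {X : Type*} (σ τ : X → X → X) : X × X → X × X :=
  fun p => (σ p.1 p.2, τ p.2 p.1)

/-- `r × id` acting on `X × X × X`. -/
def r12F {X : Type*} (σ τ : X → X → X) : X × X × X → X × X × X :=
  fun t => (σ t.1 t.2.1, τ t.2.1 t.1, t.2.2)

/-- `id × r` acting on `X × X × X`. -/
def r23F {X : Type*} (σ τ : X → X → X) : X × X × X → X × X × X :=
  fun t => (t.1, σ t.2.1 t.2.2, τ t.2.2 t.2.1)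

/-- `σ_{(a,i)}(b,j) = (b + c(i−j−1) − c(−j−1), j+1)`. -/
def Sσf {G : Type*} [AddCommGroup G] {n : ℕ} (c : ZMod n → G) :
    G × ZMod n → G × ZMod n → G × ZMod n :=
  fun x y => (y.1 + c (x.2 - y.2 - 1) - c (-y.2 - 1), y.2 + 1)

/-- `τ_{(a,i)}(b,j) = (b − c(i−j+1) + c(−j), j−1)` (the subscript is the first argument). -/
def Sτf {G : Type*} [AddCommGroup G] {n : ℕ} (c : ZMod n → G) :
    G × ZMod n → G × ZMod n → G × ZMod n :=
  fun y x => (x.1 - c (y.2 - x.2 + 1) + c (-x.2), x.2 - 1)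

/-- The construction `S(G × ℤ/nℤ, c)` yields a non-degenerate involutive set-theoretic
solution of the Yang–Baxter equation. -/
theorem construction_is_solution {G : Type*} [AddCommGroup G] (n : ℕ) (hn : 1 ≤ n)
    (c : ZMod n → G) (hc0 : c 0 = 0)
    (hgen : AddSubgroup.closure (Set.range c) = ⊤) :
    (∀ x : G × ZMod n, Function.Bijective (Sσf c x)) ∧
    (∀ y : G × ZMod n, Function.Bijective (Sτf c y)) ∧
    (∀ p : (G × ZMod n) × (G × ZMod n),
      rmapF (Sσf c) (Sτf c) (rmapF (Sσf c) (Sτf c) p) = p) ∧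
    (∀ t : (G × ZMod n) × (G × ZMod n) × (G × ZMod n),
      r12F (Sσf c) (Sτf c) (r23F (Sσf c) (Sτf c) (r12F (Sσf c) (Sτf c) t)) =
        r23F (Sσf c) (Sτf c) (r12F (Sσf c) (Sτf c) (r23F (Sσf c) (Sτf c) t))) := by
  refine ⟨?_, ?_, ?_, ?_⟩
  · intro x
    refine (Function.bijective_iff_has_inverse).2 ⟨fun y => (y.1 - c (x.2 - (y.2-1) - 1) + c (-(y.2-1) - 1), y.2 - 1), ?_, ?_⟩
    · intro y
      simp only [Sσf]
      refine Prod.ext ?_ (by ring)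
      simp only
      ring_nf
      abel
    · intro y
      simp only [Sσf]
      refine Prod.ext ?_ (by ring)
      simp only
      ring_nf
      abel
  · intro y
    refine (Function.bijective_iff_has_inverse).2 ⟨fun x => (x.1 + c (y.2 - (x.2+1) + 1) - c (-(x.2+1)), x.2 + 1), ?_, ?_⟩
    · intro x
      simp only [Sτf]
      refine Prod.ext ?_ (by ring)
      simp only
      ring_nf
      abel
    · intro x
      simp only [Sτf]
      refine Prod.ext ?_ (by ring)
      simp only
      ring_nf
      abel
  · intro p
    simp only [rmapF, Sσf, Sτf]
    refine Prod.ext (Prod.ext ?_ (by ring)) (Prod.ext ?_ (by ring)) <;> simp only <;> ring_nf <;> abel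
  · intro t
    simp only [r12F, r23F, Sσf, Sτf]
    refine Prod.ext (Prod.ext ?_ (by ring)) (Prod.ext (Prod.ext ?_ (by ring)) (Prod.ext ?_ (by ring))) <;> simp only <;> ring_nf <;> abel
end

section
/- With X = G × ℤ/nℤ and σ_{(a,i)}(b,j) = (b + c(i−j−1) − c(−j−1), j+1) as in the construction S(G × ℤ/nℤ, c) (where c(0) = 0 and {c(i)} generates G), the solution is indecomposable: the group ⟨σ_x : x ∈ X⟩ acts transitively on X. -/
/-- The left translation `σ_{(a,i)}` of the solution `S(G × ℤ/nℤ, c)`. -/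
def SσE {G : Type*} [AddCommGroup G] {n : ℕ} (c : ZMod n → G) (x : G × ZMod n) :
    Equiv.Perm (G × ZMod n) where
  toFun y := (y.1 + c (x.2 - y.2 - 1) - c (-y.2 - 1), y.2 + 1)
  invFun y := (y.1 - c (x.2 - y.2) + c (-y.2), y.2 - 1)
  left_inv y := by
    obtain ⟨b, j⟩ := y
    have h1 : x.2 - (j + 1) = x.2 - j - 1 := by ring
    have h2 : -(j + 1) = -j - 1 := by ring
    simp only [h1, h2, Prod.mk.injEq]
    constructor
    · abel
    · ring
  right_inv y := by
    obtain ⟨b, j⟩ := y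
    have h1 : x.2 - (j - 1) - 1 = x.2 - j := by ring
    have h2 : -(j - 1) - 1 = -j := by ring
    simp only [h1, h2, Prod.mk.injEq]
    constructor
    · abel
    · ring

/-- The permutation group of `S(G × ℤ/nℤ, c)`. -/
def SGX {G : Type*} [AddCommGroup G] {n : ℕ} (c : ZMod n → G) :
    Subgroup (Equiv.Perm (G × ZMod n)) :=
  Subgroup.closure (Set.range (SσE c))

/-- The displacement group of `S(G × ℤ/nℤ, c)`. -/
def SDis {G : Type*} [AddCommGroup G] {n : ℕ} (c : ZMod n → G) :
    Subgroup (Equiv.Perm (G × ZMod n)) :=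
  Subgroup.closure {g | ∃ x y : G × ZMod n, g = SσE c x * (SσE c y)⁻¹}


lemma SσE_apply {G : Type*} [AddCommGroup G] {n : ℕ} (c : ZMod n → G) (x y : G × ZMod n) :
    SσE c x y = (y.1 + c (x.2 - y.2 - 1) - c (-y.2 - 1), y.2 + 1) := rfl

lemma SσE_inv_apply {G : Type*} [AddCommGroup G] {n : ℕ} (c : ZMod n → G) (x y : G × ZMod n) :
    (SσE c x)⁻¹ y = (y.1 - c (x.2 - y.2) + c (-y.2), y.2 - 1) := rfl

lemma SσE_pow_snd {G : Type*} [AddCommGroup G] {n : ℕ} (c : ZMod n → G) (z : G × ZMod n)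
    (m : ℕ) (x : G × ZMod n) : (((SσE c z) ^ m) x).2 = x.2 + m := by
  induction m generalizing x with
  | zero => simp
  | succ m ih =>
    rw [pow_succ']
    simp only [Equiv.Perm.mul_apply, ih, SσE_apply]
    push_cast
    ring

lemma SGX_adjust {G : Type*} [AddCommGroup G] {n : ℕ}
    (c : ZMod n → G) (hc0 : c 0 = 0)
    (hgen : AddSubgroup.closure (Set.range c) = ⊤) (g' b : G) (j : ZMod n) :
    ∃ g ∈ SGX c, g (b, j) = (b + g', j) := by
  have hg' : g' ∈ AddSubgroup.closure (Set.range c) := by rw [hgen]; trivial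
  induction hg' using AddSubgroup.closure_induction generalizing b j with
  | mem x hx =>
    obtain ⟨m, rfl⟩ := hx
    refine ⟨SσE c (0, m + j) * (SσE c (0, j))⁻¹, ?_, ?_⟩
    · exact mul_mem (Subgroup.subset_closure ⟨_, rfl⟩)
        (inv_mem (Subgroup.subset_closure ⟨_, rfl⟩))
    · simp only [Equiv.Perm.mul_apply, SσE_inv_apply, SσE_apply, sub_self, hc0]
      have h1 : m + j - (j - 1) - 1 = m := by ring
      have h2 : -(j - 1) - 1 = -j := by ring
      rw [h1, h2, Prod.mk.injEq]
      constructor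
      · abel
      · ring
  | zero =>
    exact ⟨1, one_mem _, by simp⟩
  | add x y _ _ ihx ihy =>
    obtain ⟨g1, hg1, he1⟩ := ihx b j
    obtain ⟨g2, hg2, he2⟩ := ihy (b + x) j
    exact ⟨g2 * g1, mul_mem hg2 hg1, by
      simp [Equiv.Perm.mul_apply, he1, he2, add_assoc]⟩
  | neg x _ ihx =>
    obtain ⟨g, hg, he⟩ := ihx (b + -x) j
    refine ⟨g⁻¹, inv_mem hg, ?_⟩
    have : g (b + -x, j) = (b, j) := by rw [he]; congr 1; abel
    rw [← this, Equiv.Perm.inv_def, Equiv.symm_apply_apply]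

/-- The solution `S(G × ℤ/nℤ, c)` is indecomposable: its permutation group acts
transitively. -/
theorem construction_indecomposable {G : Type*} [AddCommGroup G] {n : ℕ} (hn : 1 ≤ n)
    (c : ZMod n → G) (hc0 : c 0 = 0)
    (hgen : AddSubgroup.closure (Set.range c) = ⊤) :
    ∀ x y : G × ZMod n, ∃ g ∈ SGX c, g x = y := by
  haveI : NeZero n := ⟨by omega⟩
  rintro ⟨b, j⟩ ⟨b', j'⟩
  set m : ℕ := (j' - j).val with hm
  have hmem : (SσE c (0, 0)) ^ m ∈ SGX c :=
    pow_mem (Subgroup.subset_closure (Set.mem_range_self _)) m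
  set p := ((SσE c (0, 0)) ^ m) (b, j) with hp
  have hsnd : p.2 = j' := by
    rw [hp, SσE_pow_snd, hm, ZMod.natCast_val, ZMod.cast_id]
    ring
  obtain ⟨g, hg, he⟩ := SGX_adjust c hc0 hgen (b' - p.1) p.1 p.2
  refine ⟨g * (SσE c (0, 0)) ^ m, mul_mem hg hmem, ?_⟩
  rw [Equiv.Perm.mul_apply, ← hp]
  have : (p.1, p.2) = p := rfl
  rw [this] at he
  rw [he, hsnd]
  congr 1
  abel
end

section
/- In the solution S(G × ℤ/nℤ, c) with n ∈ ℕ, n ≥ 1, every permutation σ_{(a,i)} of X = G × ℤ/nℤ is composed of cycles all of length exactly n; equivalently, σ_{(a,i)}^k(b,j) = (b,j) for some (b,j) if and only if n divides k, and σ_{(a,i)}^n = id. -/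
lemma SσE_pow_apply {G : Type*} [AddCommGroup G] {n : ℕ} (c : ZMod n → G)
    (x y : G × ZMod n) (k : ℕ) :
    ((SσE c x) ^ k) y =
      (y.1 + ∑ ℓ ∈ Finset.range k, (c (x.2 - y.2 - 1 - ℓ) - c (-y.2 - 1 - ℓ)),
        y.2 + k) := by
  induction k generalizing y with
  | zero => simp
  | succ k ih =>
    rw [pow_succ, Equiv.Perm.mul_apply, ih, SσE_apply, Finset.sum_range_succ']
    push_cast
    refine Prod.ext ?_ ?_
    · simp only
      have h1 : ∀ ℓ : ℕ, x.2 - (y.2 + 1) - 1 - (ℓ : ZMod n) = x.2 - y.2 - 1 - ((ℓ : ZMod n) + 1) := by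
        intro ℓ; ring
      have h2 : ∀ ℓ : ℕ, -(y.2 + 1) - 1 - (ℓ : ZMod n) = -y.2 - 1 - ((ℓ : ZMod n) + 1) := by
        intro ℓ; ring
      simp only [h1, h2, sub_zero]
      abel
    · simp only; ring

lemma sum_cycle {G : Type*} [AddCommGroup G] {n : ℕ} [NeZero n] (c : ZMod n → G)
    (t : ZMod n) : ∑ ℓ ∈ Finset.range n, c (t - (ℓ : ZMod n)) = ∑ u : ZMod n, c u := by
  have h1 : ∑ ℓ ∈ Finset.range n, c (t - (ℓ : ZMod n)) = ∑ u : ZMod n, c (t - u) := by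
    refine Finset.sum_nbij' (fun ℓ => ((ℓ : ZMod n))) (fun u => u.val) ?_ ?_ ?_ ?_ ?_ <;>
      intros <;> simp_all [ZMod.natCast_self, ZMod.val_cast_of_lt, ZMod.val_lt, Nat.mod_eq_of_lt]
  rw [h1]
  exact Fintype.sum_equiv (Equiv.subLeft t) _ _ (fun u => rfl)

/-- In `S(G × ℤ/nℤ, c)` with `n ≥ 1`, every `σ_{(a,i)}` is composed of cycles of length
exactly `n`: `σ_{(a,i)}^k` fixes some point iff `n ∣ k`, and `σ_{(a,i)}^n = 1`. -/
theorem construction_cycle_lengths {G : Type*} [AddCommGroup G] {n : ℕ} (hn : 1 ≤ n)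
    (c : ZMod n → G) (hc0 : c 0 = 0)
    (hgen : AddSubgroup.closure (Set.range c) = ⊤) :
    (∀ (x y : G × ZMod n) (k : ℕ), ((SσE c x) ^ k) y = y ↔ n ∣ k) ∧
    (∀ x : G × ZMod n, (SσE c x) ^ n = 1) := by
  haveI : NeZero n := ⟨by omega⟩
  have hpow : ∀ x : G × ZMod n, (SσE c x) ^ n = 1 := by
    intro x
    refine Equiv.ext fun y => ?_
    rw [SσE_pow_apply]
    have hs : ∑ ℓ ∈ Finset.range n, (c (x.2 - y.2 - 1 - ℓ) - c (-y.2 - 1 - ℓ)) = 0 := by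
      rw [Finset.sum_sub_distrib, sum_cycle c (x.2 - y.2 - 1), sum_cycle c (-y.2 - 1),
        sub_self]
    rw [hs, ZMod.natCast_self]
    simp
  refine ⟨fun x y k => ?_, hpow⟩
  constructor
  · intro h
    have h2 := congrArg Prod.snd h
    rw [SσE_pow_apply] at h2
    simp only at h2
    have : (k : ZMod n) = 0 := by
      have := congrArg (fun t => t - y.2) h2
      simpa [add_sub_cancel_left] using this
    exact (ZMod.natCast_eq_zero_iff k n).mp this
  · rintro ⟨m, rfl⟩
    rw [pow_mul, hpow, one_pow]
    rfl
end

section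
/- For the solution (X,σ,τ) = S(G × ℤ/nℤ, c), the map Ψ : Dis(X) → G sending a product ∏ L_{(0,i)}^{p_i} to Σ p_i·c(i), where L_{(a,i)} = σ_{(a,i)} σ_{(0,0)}⁻¹, is a well-defined surjective group homomorphism whose kernel is the stabilizer Dis(X)_{(0,0)}; consequently G ≅ Dis(X)/Dis(X)_{(0,0)}. -/
lemma SDis_gen_apply {G : Type*} [AddCommGroup G] {n : ℕ} (c : ZMod n → G)
    (x y p : G × ZMod n) :
    (SσE c x * (SσE c y)⁻¹) p = (p.1 + c (x.2 - p.2) - c (y.2 - p.2), p.2) := by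
  obtain ⟨b, j⟩ := p
  have h1 : x.2 - (j - 1) - 1 = x.2 - j := by ring
  have h2 : -(j - 1) - 1 = -j := by ring
  simp only [Equiv.Perm.mul_apply, Equiv.Perm.inv_def, SσE, Equiv.coe_fn_mk,
    Equiv.coe_fn_symm_mk, h1, h2, Prod.mk.injEq]
  constructor
  · abel
  · ring

/-- Every element of `SDis c` acts by translation in the first coordinate and
fixes the second coordinate. -/
lemma SDis_apply {G : Type*} [AddCommGroup G] {n : ℕ} (c : ZMod n → G)
    {g : Equiv.Perm (G × ZMod n)} (hg : g ∈ SDis c) :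
    ∀ p : G × ZMod n, g p = (p.1 + (g (0, p.2)).1, p.2) := by
  induction hg using Subgroup.closure_induction with
  | mem x hx =>
    intro p
    obtain ⟨u, v, rfl⟩ := hx
    rw [SDis_gen_apply, SDis_gen_apply]
    simp only [Prod.mk.injEq]
    exact ⟨by abel, trivial⟩
  | one => intro p; simp
  | mul x y hx hy ihx ihy =>
    intro p
    simp only [Equiv.Perm.mul_apply]
    rw [ihy p, ihx (p.1 + (y (0, p.2)).1, p.2), ihy (0, p.2),
      ihx ((0 : G) + (y ((0 : G), p.2)).1, p.2)]
    simp only [Prod.mk.injEq]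
    exact ⟨by abel, trivial⟩
  | inv x hx ihx =>
    have key : ∀ q : G × ZMod n, x⁻¹ q = (q.1 - (x (0, q.2)).1, q.2) := by
      intro q
      rw [Equiv.Perm.inv_def, Equiv.symm_apply_eq, ihx (q.1 - (x (0, q.2)).1, q.2)]
      obtain ⟨b, j⟩ := q
      simp only [Prod.mk.injEq]
      exact ⟨by abel, trivial⟩
    intro p
    rw [key p, key (0, p.2)]
    simp only [Prod.mk.injEq]
    exact ⟨by abel, trivial⟩

/-- For `(X,σ,τ) = S(G × ℤ/nℤ, c)`, the map `Ψ : Dis(X) → G` sending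
`∏ L_{(0,i)}^{p_i} ↦ Σ p_i·c(i)` (where `L_{(a,i)} = σ_{(a,i)} σ_{(0,0)}⁻¹`) is a
well-defined surjective group homomorphism with kernel the stabilizer `Dis(X)_{(0,0)}`;
consequently `G ≅ Dis(X)/Dis(X)_{(0,0)}`. -/
theorem construction_dis_hom {G : Type*} [AddCommGroup G] {n : ℕ} (hn : 1 ≤ n)
    (c : ZMod n → G) (hc0 : c 0 = 0)
    (hgen : AddSubgroup.closure (Set.range c) = ⊤) :
    ∃ Ψ : SDis c →* Multiplicative G,
      Function.Surjective Ψ ∧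
      (∀ (i : ZMod n) (h : SσE c (0, i) * (SσE c ((0 : G), (0 : ZMod n)))⁻¹ ∈ SDis c),
        Ψ ⟨SσE c (0, i) * (SσE c ((0 : G), (0 : ZMod n)))⁻¹, h⟩ =
          Multiplicative.ofAdd (c i)) ∧
      (∀ g : SDis c,
        Ψ g = 1 ↔ (g : Equiv.Perm (G × ZMod n)) ((0 : G), (0 : ZMod n)) = (0, 0)) ∧
      Nonempty ((SDis c ⧸ Ψ.ker) ≃* Multiplicative G) := by
  classical
  set Ψ : SDis c →* Multiplicative G :=
    { toFun := fun g => Multiplicative.ofAdd (((g : Equiv.Perm (G × ZMod n)) (0, 0)).1)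
      map_one' := by simp
      map_mul' := by
        intro g h
        have hg := SDis_apply c g.2
        have hh := SDis_apply c h.2
        have h2 : ((h : Equiv.Perm (G × ZMod n)) ((0 : G), (0 : ZMod n))).2 = 0 := by
          rw [hh (0, 0)]
        simp only [Subgroup.coe_mul, Equiv.Perm.mul_apply]
        rw [hg ((h : Equiv.Perm (G × ZMod n)) (0, 0)), h2, ← ofAdd_add]
        exact congrArg _ (add_comm _ _) } with hΨ
  have hL : ∀ i : ZMod n, ∀ h, Ψ ⟨SσE c (0, i) * (SσE c ((0 : G), (0 : ZMod n)))⁻¹, h⟩ =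
      Multiplicative.ofAdd (c i) := by
    intro i h
    have hval : Ψ ⟨SσE c (0, i) * (SσE c ((0 : G), (0 : ZMod n)))⁻¹, h⟩ =
        Multiplicative.ofAdd (((SσE c (0, i) * (SσE c ((0:G), (0:ZMod n)))⁻¹) ((0:G), (0:ZMod n))).1) := rfl
    rw [hval, SDis_gen_apply]
    simp [hc0]
  have hmem : ∀ i : ZMod n, SσE c (0, i) * (SσE c ((0 : G), (0 : ZMod n)))⁻¹ ∈ SDis c :=
    fun i => Subgroup.subset_closure ⟨(0, i), (0, 0), rfl⟩
  have hsurj : Function.Surjective Ψ := by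
    intro a
    have ha : Multiplicative.toAdd a ∈ AddSubgroup.closure (Set.range c) := by
      rw [hgen]; trivial
    suffices h : ∀ b ∈ AddSubgroup.closure (Set.range c),
        ∃ g : SDis c, Ψ g = Multiplicative.ofAdd b by
      obtain ⟨g, hg⟩ := h _ ha
      exact ⟨g, by simpa using hg⟩
    intro b hb
    induction hb using AddSubgroup.closure_induction with
    | mem x hx =>
      obtain ⟨i, rfl⟩ := hx
      exact ⟨⟨_, hmem i⟩, hL i (hmem i)⟩
    | zero => exact ⟨1, by simp⟩
    | add x y hx hy ihx ihy =>
      obtain ⟨g, hg⟩ := ihx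
      obtain ⟨g', hg'⟩ := ihy
      exact ⟨g * g', by rw [map_mul, hg, hg', ← ofAdd_add]⟩
    | neg x hx ihx =>
      obtain ⟨g, hg⟩ := ihx
      exact ⟨g⁻¹, by rw [map_inv, hg, ← ofAdd_neg]⟩
  have hker : ∀ g : SDis c,
      Ψ g = 1 ↔ (g : Equiv.Perm (G × ZMod n)) ((0 : G), (0 : ZMod n)) = (0, 0) := by
    intro g
    have hg := SDis_apply c g.2 ((0 : G), (0 : ZMod n))
    have hval : Ψ g =
        Multiplicative.ofAdd (((g : Equiv.Perm (G × ZMod n)) ((0 : G), (0 : ZMod n))).1) := rfl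
    constructor
    · intro h
      have h0 : ((g : Equiv.Perm (G × ZMod n)) ((0 : G), (0 : ZMod n))).1 = 0 := by
        have := congrArg Multiplicative.toAdd (hval.symm.trans h)
        simpa using this
      rw [hg, h0]
      simp
    · intro h
      rw [hval, h]
      simp
  exact ⟨Ψ, hsurj, fun i h => hL i h, hker,
    ⟨QuotientGroup.quotientKerEquivOfSurjective Ψ hsurj⟩⟩
end

section
/- For the solution (X,σ,τ) = S(G × ℤ/nℤ, c), the permutation group G(X) = ⟨σ_x : x ∈ X⟩ is an internal semidirect product of Dis(X) and the cyclic subgroup generated by σ_{(0,0)}: Dis(X) is normal, G(X) = Dis(X)·⟨σ_{(0,0)}⟩, and Dis(X) ∩ ⟨σ_{(0,0)}⟩ = {id}. -/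
section Aux

variable {G : Type*} [AddCommGroup G] {n : ℕ} (c : ZMod n → G)

lemma sσ_apply (x : G × ZMod n) (b : G) (j : ZMod n) :
    SσE c x (b, j) = (b + c (x.2 - j - 1) - c (-j - 1), j + 1) := rfl

lemma sσ_inv_apply (x : G × ZMod n) (b : G) (j : ZMod n) :
    (SσE c x)⁻¹ (b, j) = (b - c (x.2 - j) + c (-j), j - 1) := rfl

lemma T_apply (b : G) (j : ZMod n) :
    SσE c ((0 : G), (0 : ZMod n)) (b, j) = (b, j + 1) := by
  rw [sσ_apply]
  simp [zero_sub]

lemma T_inv_apply (b : G) (j : ZMod n) :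
    (SσE c ((0 : G), (0 : ZMod n)))⁻¹ (b, j) = (b, j - 1) := by
  rw [sσ_inv_apply]
  simp [zero_sub]

lemma dis_gen_apply (x y : G × ZMod n) (b : G) (j : ZMod n) :
    (SσE c x * (SσE c y)⁻¹) (b, j) = (b + c (x.2 - j) - c (y.2 - j), j) := by
  rw [Equiv.Perm.mul_apply, sσ_inv_apply, sσ_apply]
  have h1 : x.2 - (j - 1) - 1 = x.2 - j := by ring
  have h2 : -(j - 1) - 1 = -j := by ring
  rw [h1, h2]
  refine Prod.ext ?_ (by ring)
  simp only
  abel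

lemma T_zpow_apply (k : ℤ) : ∀ (b : G) (j : ZMod n),
    ((SσE c ((0 : G), (0 : ZMod n))) ^ k) (b, j) = (b, j + (k : ZMod n)) := by
  induction k using Int.induction_on with
  | zero => intro b j; simp
  | succ m ih =>
    intro b j
    rw [zpow_add_one, Equiv.Perm.mul_apply, T_apply, ih]
    push_cast
    ring_nf
  | pred m ih =>
    intro b j
    rw [zpow_sub_one, Equiv.Perm.mul_apply, T_inv_apply, ih]
    push_cast
    ring_nf

lemma sdis_snd {d : Equiv.Perm (G × ZMod n)} (hd : d ∈ SDis c) (p : G × ZMod n) :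
    (d p).2 = p.2 := by
  revert p
  induction hd using Subgroup.closure_induction with
  | mem g hg =>
    obtain ⟨x, y, rfl⟩ := hg
    rintro ⟨b, j⟩
    rw [dis_gen_apply]
  | one => simp
  | mul a b _ _ ha hb =>
    intro p
    rw [Equiv.Perm.mul_apply, ha, hb]
  | inv a _ ha =>
    intro p
    have := ha (a⁻¹ p)
    rw [show a (a⁻¹ p) = p from Equiv.apply_symm_apply a p] at this
    exact this.symm

lemma conjT_mem {d : Equiv.Perm (G × ZMod n)} (hd : d ∈ SDis c) :
    SσE c ((0 : G), (0 : ZMod n)) * d * (SσE c ((0 : G), (0 : ZMod n)))⁻¹ ∈ SDis c := by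
  induction hd using Subgroup.closure_induction with
  | mem g hg =>
    obtain ⟨x, y, rfl⟩ := hg
    apply Subgroup.subset_closure
    refine ⟨((0 : G), x.2 + 1), ((0 : G), y.2 + 1), ?_⟩
    apply Equiv.ext
    rintro ⟨b, j⟩
    rw [dis_gen_apply, Equiv.Perm.mul_apply, Equiv.Perm.mul_apply, T_inv_apply,
      dis_gen_apply, T_apply]
    have h1 : x.2 - (j - 1) = x.2 + 1 - j := by ring
    have h2 : y.2 - (j - 1) = y.2 + 1 - j := by ring
    rw [h1, h2]
    simp
  | one => simpa using one_mem _
  | mul a b ha hb iha ihb =>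
    have : SσE c ((0 : G), (0 : ZMod n)) * (a * b) * (SσE c ((0 : G), (0 : ZMod n)))⁻¹ =
        (SσE c ((0 : G), (0 : ZMod n)) * a * (SσE c ((0 : G), (0 : ZMod n)))⁻¹) *
        (SσE c ((0 : G), (0 : ZMod n)) * b * (SσE c ((0 : G), (0 : ZMod n)))⁻¹) := by group
    rw [this]
    exact mul_mem iha ihb
  | inv a ha iha =>
    have : SσE c ((0 : G), (0 : ZMod n)) * a⁻¹ * (SσE c ((0 : G), (0 : ZMod n)))⁻¹ =
        (SσE c ((0 : G), (0 : ZMod n)) * a * (SσE c ((0 : G), (0 : ZMod n)))⁻¹)⁻¹ := by group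
    rw [this]
    exact inv_mem iha

lemma conjTinv_mem {d : Equiv.Perm (G × ZMod n)} (hd : d ∈ SDis c) :
    (SσE c ((0 : G), (0 : ZMod n)))⁻¹ * d * SσE c ((0 : G), (0 : ZMod n)) ∈ SDis c := by
  induction hd using Subgroup.closure_induction with
  | mem g hg =>
    obtain ⟨x, y, rfl⟩ := hg
    apply Subgroup.subset_closure
    refine ⟨((0 : G), x.2 - 1), ((0 : G), y.2 - 1), ?_⟩
    apply Equiv.ext
    rintro ⟨b, j⟩
    rw [dis_gen_apply, Equiv.Perm.mul_apply, Equiv.Perm.mul_apply, T_apply,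
      dis_gen_apply, T_inv_apply]
    have h1 : x.2 - (j + 1) = x.2 - 1 - j := by ring
    have h2 : y.2 - (j + 1) = y.2 - 1 - j := by ring
    rw [h1, h2]
    simp
  | one => simpa using one_mem _
  | mul a b ha hb iha ihb =>
    have : (SσE c ((0 : G), (0 : ZMod n)))⁻¹ * (a * b) * SσE c ((0 : G), (0 : ZMod n)) =
        ((SσE c ((0 : G), (0 : ZMod n)))⁻¹ * a * SσE c ((0 : G), (0 : ZMod n))) *
        ((SσE c ((0 : G), (0 : ZMod n)))⁻¹ * b * SσE c ((0 : G), (0 : ZMod n))) := by group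
    rw [this]
    exact mul_mem iha ihb
  | inv a ha iha =>
    have : (SσE c ((0 : G), (0 : ZMod n)))⁻¹ * a⁻¹ * SσE c ((0 : G), (0 : ZMod n)) =
        ((SσE c ((0 : G), (0 : ZMod n)))⁻¹ * a * SσE c ((0 : G), (0 : ZMod n)))⁻¹ := by group
    rw [this]
    exact inv_mem iha

lemma conj_mem {g : Equiv.Perm (G × ZMod n)} (hg : g ∈ SGX c) :
    (∀ d ∈ SDis c, g * d * g⁻¹ ∈ SDis c) ∧ (∀ d ∈ SDis c, g⁻¹ * d * g ∈ SDis c) := by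
  induction hg using Subgroup.closure_induction with
  | mem s hs =>
    obtain ⟨x, rfl⟩ := hs
    have hu : SσE c x * (SσE c ((0 : G), (0 : ZMod n)))⁻¹ ∈ SDis c :=
      Subgroup.subset_closure ⟨x, ((0 : G), (0 : ZMod n)), rfl⟩
    set T := SσE c ((0 : G), (0 : ZMod n)) with hT
    set u := SσE c x * T⁻¹ with hu_def
    have hx : SσE c x = u * T := by rw [hu_def]; group
    constructor
    · intro d hd
      have : SσE c x * d * (SσE c x)⁻¹ = u * (T * d * T⁻¹) * u⁻¹ := by rw [hx]; group
      rw [this]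
      exact mul_mem (mul_mem hu (conjT_mem c hd)) (inv_mem hu)
    · intro d hd
      have : (SσE c x)⁻¹ * d * SσE c x = T⁻¹ * (u⁻¹ * d * u) * T := by rw [hx]; group
      rw [this]
      have h1 : u⁻¹ * d * u ∈ SDis c := by
        have : u⁻¹ * d * u = u⁻¹ * d * (u⁻¹)⁻¹ := by group
        rw [this]
        exact mul_mem (mul_mem (inv_mem hu) hd) (inv_mem (inv_mem hu))
      exact conjTinv_mem c h1
  | one => exact ⟨fun d hd => by simpa using hd, fun d hd => by simpa using hd⟩
  | mul a b ha hb iha ihb =>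
    constructor
    · intro d hd
      have : a * b * d * (a * b)⁻¹ = a * (b * d * b⁻¹) * a⁻¹ := by group
      rw [this]
      exact iha.1 _ (ihb.1 d hd)
    · intro d hd
      have : (a * b)⁻¹ * d * (a * b) = b⁻¹ * (a⁻¹ * d * a) * b := by group
      rw [this]
      exact ihb.2 _ (iha.2 d hd)
  | inv a ha iha =>
    refine ⟨fun d hd => ?_, fun d hd => ?_⟩
    · have : a⁻¹ * d * a⁻¹⁻¹ = a⁻¹ * d * a := by group
      rw [this]; exact iha.2 d hd
    · have : a⁻¹⁻¹ * d * a⁻¹ = a * d * a⁻¹ := by group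
      rw [this]; exact iha.1 d hd

end Aux

/-- For `S(G × ℤ/nℤ, c)`, the permutation group is the internal semidirect product of the
displacement group and the cyclic subgroup generated by `σ_{(0,0)}`: the displacement group
is normal in `G(X)`, `G(X) = Dis(X)·⟨σ_{(0,0)}⟩`, and `Dis(X) ∩ ⟨σ_{(0,0)}⟩ = {1}`. -/
theorem construction_semidirect {G : Type*} [AddCommGroup G] {n : ℕ} (hn : 1 ≤ n)
    (c : ZMod n → G) (hc0 : c 0 = 0)
    (hgen : AddSubgroup.closure (Set.range c) = ⊤) :
    (∀ g ∈ SGX c, ∀ d ∈ SDis c, g * d * g⁻¹ ∈ SDis c) ∧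
    (∀ g ∈ SGX c, ∃ d ∈ SDis c, ∃ k : ℤ,
      g = d * (SσE c ((0 : G), (0 : ZMod n))) ^ k) ∧
    (∀ g : Equiv.Perm (G × ZMod n), g ∈ SDis c →
      g ∈ Subgroup.zpowers (SσE c ((0 : G), (0 : ZMod n))) → g = 1) := by
  refine ⟨fun g hg d hd => (conj_mem c hg).1 d hd, ?_, ?_⟩
  · intro g hg
    induction hg using Subgroup.closure_induction with
    | mem s hs =>
      obtain ⟨x, rfl⟩ := hs
      refine ⟨SσE c x * (SσE c ((0 : G), (0 : ZMod n)))⁻¹,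
        Subgroup.subset_closure ⟨x, ((0 : G), (0 : ZMod n)), rfl⟩, 1, by group⟩
    | one => exact ⟨1, one_mem _, 0, by group⟩
    | mul a b ha hb iha ihb =>
      obtain ⟨d₁, hd₁, k₁, rfl⟩ := iha
      obtain ⟨d₂, hd₂, k₂, rfl⟩ := ihb
      set T := SσE c ((0 : G), (0 : ZMod n)) with hT
      have hTk : (T : Equiv.Perm (G × ZMod n)) ^ k₁ ∈ SGX c :=
        zpow_mem (Subgroup.subset_closure (Set.mem_range_self _)) k₁
      refine ⟨d₁ * (T ^ k₁ * d₂ * (T ^ k₁)⁻¹), mul_mem hd₁ ((conj_mem c hTk).1 d₂ hd₂),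
        k₁ + k₂, ?_⟩
      rw [zpow_add]
      group
    | inv a ha iha =>
      obtain ⟨d, hd, k, rfl⟩ := iha
      set T := SσE c ((0 : G), (0 : ZMod n)) with hT
      have hTk : ((T : Equiv.Perm (G × ZMod n)) ^ k)⁻¹ ∈ SGX c :=
        inv_mem (zpow_mem (Subgroup.subset_closure (Set.mem_range_self _)) k)
      refine ⟨(T ^ k)⁻¹ * d⁻¹ * ((T ^ k)⁻¹)⁻¹, (conj_mem c hTk).1 d⁻¹ (inv_mem hd), -k, ?_⟩
      rw [zpow_neg]
      group
  · intro g hgd hgz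
    obtain ⟨k, rfl⟩ := Subgroup.mem_zpowers_iff.mp hgz
    have hsnd := sdis_snd c hgd ((0 : G), (0 : ZMod n))
    rw [T_zpow_apply] at hsnd
    simp only at hsnd
    have hk : (k : ZMod n) = 0 := by simpa using hsnd
    apply Equiv.ext
    rintro ⟨b, j⟩
    rw [T_zpow_apply, hk, add_zero]
    rfl
end

section
/- The permutation group of the solution S(G × ℤ/nℤ, c) is abelian if and only if c(i mod n) = i·c(1) for all integers i. -/
/-- The permutation group of `S(G × ℤ/nℤ, c)` is abelian if and only if
`c(i mod n) = i·c(1)` for all integers `i`. -/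
theorem construction_abelian_iff {G : Type*} [AddCommGroup G] {n : ℕ} (hn : 1 ≤ n)
    (c : ZMod n → G) (hc0 : c 0 = 0)
    (hgen : AddSubgroup.closure (Set.range c) = ⊤) :
    (∀ a ∈ SGX c, ∀ b ∈ SGX c, a * b = b * a) ↔
      (∀ i : ℤ, c (i : ZMod n) = i • c 1) := by
  haveI : NeZero n := ⟨by omega⟩
  constructor
  · intro hab
    have hmem : ∀ x, SσE c x ∈ SGX c := fun x => Subgroup.subset_closure ⟨x, rfl⟩
    have key : ∀ s : ZMod n, c (s + 1) = c s + c 1 := by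
      intro s
      have h := hab _ (hmem ((0 : G), s + 2)) _ (hmem ((0 : G), (2 : ZMod n)))
      have h0 := congrArg (fun f : Equiv.Perm (G × ZMod n) => (f ((0 : G), (0 : ZMod n))).1) h
      simp only [Equiv.Perm.mul_apply, SσE, Equiv.coe_fn_mk] at h0
      have e1 : (2 : ZMod n) - 0 - 1 = 1 := by ring
      have e2 : s + 2 - (0 + 1) - 1 = s := by ring
      have e3 : s + 2 - 0 - 1 = s + 1 := by ring
      have e4 : (2 : ZMod n) - (0 + 1) - 1 = 0 := by ring
      rw [e1, e2, e3, e4, hc0] at h0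
      have : c 1 + c s = c (s + 1) := by
        have := h0
        abel_nf at this ⊢
        linear_combination (norm := abel_nf) this
      rw [← this]; abel
    intro i
    induction i using Int.induction_on with
    | zero => simpa using hc0
    | succ k ih =>
        push_cast at ih ⊢
        rw [key, ih, add_zsmul, one_zsmul]
    | pred k ih =>
        push_cast at ih ⊢
        have h1 := key (-(k : ZMod n) - 1)
        have e : -(k : ZMod n) - 1 + 1 = -(k : ZMod n) := by ring
        rw [e, ih] at h1
        have h2 : c (-(k : ZMod n) - 1) = (-(k:ℤ)) • c 1 - c 1 := by
          rw [h1]; abel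
        rw [h2, sub_zsmul, one_zsmul]
        abel
  · intro h
    have hadd : ∀ s t : ZMod n, c (s + t) = c s + c t := by
      intro s t
      obtain ⟨a, rfl⟩ := ZMod.intCast_surjective s
      obtain ⟨b, rfl⟩ := ZMod.intCast_surjective t
      rw [← Int.cast_add, h, h, h, add_zsmul]
    have hcomm : ∀ x y, SσE c x * SσE c y = SσE c y * SσE c x := by
      intro x y
      apply Equiv.ext
      rintro ⟨b, j⟩
      simp only [Equiv.Perm.mul_apply, SσE, Equiv.coe_fn_mk, Prod.mk.injEq]
      refine ⟨?_, trivial⟩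
      have key : ∀ u v : ZMod n, c (u - j - 1) + c (v - (j + 1) - 1) =
          c u + c v + (c (-j - 1) + c (-j - 1 - 1)) := by
        intro u v
        have e1 : u - j - 1 = u + (-j - 1) := by ring
        have e2 : v - (j + 1) - 1 = v + (-j - 1 - 1) := by ring
        have e3 : (-j - 1 - 1 : ZMod n) = (-j - 1) + (-1) := by ring
        have e4 : (-j - 1 : ZMod n) + (-1) = -j - 1 - 1 := by ring
        rw [e1, e2, hadd, e3, hadd, hadd]
        abel
      have h1 := key y.2 x.2
      have h2 := key x.2 y.2
      have e5 : (-(j+1) - 1 : ZMod n) = -j - 1 - 1 := by ring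
      rw [e5]
      have : c (y.2 - j - 1) + c (x.2 - (j + 1) - 1) =
          c (x.2 - j - 1) + c (y.2 - (j + 1) - 1) := by rw [h1, h2]; abel
      linear_combination (norm := abel_nf) this
    intro a ha b hb
    refine Subgroup.closure_induction₂ ?_ ?_ ?_ ?_ ?_ ?_ ?_ ha hb
    · rintro x y ⟨u, rfl⟩ ⟨v, rfl⟩
      exact hcomm u v
    · intro x hx; simp
    · intro x hx; simp
    · intro x y z hx hy hz h1 h2
      rw [mul_assoc, h2, ← mul_assoc, h1, mul_assoc]
    · intro y z x hy hz hx h1 h2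
      rw [← mul_assoc, h1, mul_assoc, h2, ← mul_assoc]
    · intro x y hx hy hxy
      have := congrArg (fun t => x⁻¹ * t * x⁻¹) hxy.symm
      simpa [mul_assoc] using this
    · intro x y hx hy hxy
      have := congrArg (fun t => y⁻¹ * t * y⁻¹) hxy.symm
      simpa [mul_assoc] using this
end

section
/- Let r, k ∈ ℕ, let G be the free ℤ/kℤ-module of rank r with basis e_1,…,e_r, set n = 2r, c(0) = 0, c(i) = e_1 + ⋯ + e_i for 1 ≤ i ≤ r, and c(i+r) = e_{i+1} + ⋯ + e_r for 1 ≤ i ≤ r. Then for the solution S(G × ℤ/nℤ, c) the displacement group Dis(X) is isomorphic to G (i.e. the stabilizer Dis(X)_{(0,0)} is trivial), and the solution is uniconnected (G(X) acts regularly on X). -/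
/-- The sequence `c` of Proposition 4.10: on `ℤ/2rℤ`, `c(0) = 0`, `c(i) = e_1 + ⋯ + e_i`
for `1 ≤ i ≤ r` and `c(i+r) = e_{i+1} + ⋯ + e_r` for `1 ≤ i ≤ r`, where `e_1, …, e_r` is
the standard basis of the free `ℤ/kℤ`-module `(ℤ/kℤ)^r` (here written 0-indexed). -/
def cfree (r k : ℕ) : ZMod (2 * r) → (Fin r → ZMod k) :=
  fun j =>
    if j.val ≤ r then
      ∑ t ∈ Finset.univ.filter (fun t : Fin r => (t : ℕ) < j.val), Pi.single t (1 : ZMod k)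
    else
      ∑ t ∈ Finset.univ.filter (fun t : Fin r => j.val - r ≤ (t : ℕ)), Pi.single t (1 : ZMod k)

namespace PropAux

variable (r k : ℕ)

/-- evaluation of `cfree` -/
lemma ceval (m : ZMod (2*r)) (s : Fin r) :
    cfree r k m s =
      if (m.val ≤ r ∧ (s:ℕ) < m.val) ∨ (r < m.val ∧ m.val - r ≤ (s:ℕ)) then 1 else 0 := by
  unfold cfree
  by_cases h : m.val ≤ r
  · simp only [h, if_true, true_and]
    rw [Finset.sum_apply]
    simp only [Pi.single_apply]
    rw [Finset.sum_ite_eq _ s]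
    simp only [Finset.mem_filter, Finset.mem_univ, true_and]
    have := Nat.lt_irrefl r
    split_ifs with h1 h2 h2 <;> first | rfl | omega
  · simp only [h, if_false, false_and, false_or]
    rw [Finset.sum_apply]
    simp only [Pi.single_apply]
    rw [Finset.sum_ite_eq _ s]
    simp only [Finset.mem_filter, Finset.mem_univ, true_and]
    split_ifs with h1 h2 h2 <;> first | rfl | omega

lemma c_zero (hr : 0 < r) : cfree r k 0 = 0 := by
  haveI : NeZero (2*r) := ⟨by omega⟩
  funext s
  rw [ceval, ZMod.val_zero]
  simp only [Pi.zero_apply]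
  split_ifs with h <;> first | rfl | omega

/-- the difference sequence -/
def Dd (u : ZMod (2*r)) : Fin r → ZMod k := cfree r k (u+1) - cfree r k u

lemma Dform (hr : 0 < r) (u : ZMod (2*r)) :
    Dd r k u = if h : u.val < r then Pi.single (⟨u.val, h⟩ : Fin r) (1 : ZMod k)
      else -Pi.single (⟨u.val - r, by have h2 := @ZMod.val_lt (2*r) ⟨by omega⟩ u; omega⟩ : Fin r) (1 : ZMod k) := by
  haveI : NeZero (2*r) := ⟨by omega⟩
  haveI : Fact (1 < 2*r) := ⟨by omega⟩
  have hval : u.val < 2*r := u.val_lt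
  have h1 : (u + 1).val = (u.val + 1) % (2*r) := by
    rw [ZMod.val_add, ZMod.val_one]
  by_cases hc : u.val + 1 < 2*r
  · rw [Nat.mod_eq_of_lt hc] at h1
    funext s
    have hs := s.isLt
    simp only [Dd, Pi.sub_apply, ceval, h1, dite_apply, Pi.single_apply, Pi.neg_apply,
      Fin.ext_iff]
    split_ifs <;> first | ring1 | (exfalso; omega)
  · have h2r : u.val = 2*r - 1 := by omega
    have he : u.val + 1 = 2*r := by omega
    have h0 : (u + 1).val = 0 := by rw [h1, he, Nat.mod_self]
    funext s
    have hs := s.isLt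
    simp only [Dd, Pi.sub_apply, ceval, h0, dite_apply, Pi.single_apply, Pi.neg_apply,
      Fin.ext_iff]
    split_ifs <;> first | ring1 | (exfalso; omega)

lemma anti (hr : 0 < r) (v : ZMod (2*r)) :
    Dd r k (v + (r : ZMod (2*r))) = - Dd r k v := by
  haveI : NeZero (2*r) := ⟨by omega⟩
  have hval : v.val < 2*r := v.val_lt
  have hrv : ((r : ℕ) : ZMod (2*r)).val = r := ZMod.val_cast_of_lt (by omega)
  have h1 : (v + (r : ZMod (2*r))).val = (v.val + r) % (2*r) := by
    rw [ZMod.val_add, hrv]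
  rw [Dform r k hr, Dform r k hr]
  by_cases hc : v.val < r
  · have h2 : (v + (r : ZMod (2*r))).val = v.val + r := by
      rw [h1, Nat.mod_eq_of_lt (by omega)]
    rw [dif_neg (by omega), dif_pos hc]
    congr 1
    ext1
    simp only [h2, Pi.single_apply, Fin.ext_iff]
    all_goals split_ifs <;> first | rfl | (exfalso; omega)
  · have h2 : (v + (r : ZMod (2*r))).val = v.val - r := by
      rw [h1]
      have he : v.val + r = (v.val - r) + 2*r := by omega
      rw [he, Nat.add_mod_right, Nat.mod_eq_of_lt (by omega)]
    rw [dif_pos (by omega : (v + (r : ZMod (2*r))).val < r), dif_neg hc, neg_neg]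
    congr 1
    ext1
    simp only [h2, Pi.single_apply, Fin.ext_iff]
    all_goals split_ifs <;> first | rfl | (exfalso; omega)

/-- the fundamental linear combination -/
def Phi (a : Fin r → ZMod k) (j : ZMod (2*r)) : Fin r → ZMod k :=
  ∑ t : Fin r, a t • Dd r k (((t : ℕ) : ZMod (2*r)) - j)

lemma Phi_add (a b : Fin r → ZMod k) (j : ZMod (2*r)) :
    Phi r k (a + b) j = Phi r k a j + Phi r k b j := by
  simp only [Phi, Pi.add_apply, add_smul, Finset.sum_add_distrib]

lemma Phi_zero (j : ZMod (2*r)) : Phi r k 0 j = 0 := by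
  simp only [Phi, Pi.zero_apply, zero_smul, Finset.sum_const_zero]

lemma Phi_neg (a : Fin r → ZMod k) (j : ZMod (2*r)) :
    Phi r k (-a) j = - Phi r k a j := by
  simp only [Phi, Pi.neg_apply, neg_smul, Finset.sum_neg_distrib]

lemma Phi_sub (a b : Fin r → ZMod k) (j : ZMod (2*r)) :
    Phi r k (a - b) j = Phi r k a j - Phi r k b j := by
  simp only [Phi, Pi.sub_apply, sub_smul, Finset.sum_sub_distrib]

lemma Phi_smul (v : ZMod k) (a : Fin r → ZMod k) (j : ZMod (2*r)) :
    Phi r k (v • a) j = v • Phi r k a j := by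
  simp only [Phi, Pi.smul_apply, smul_eq_mul, mul_smul, Finset.smul_sum]

lemma Phi_sum {ι : Type*} (s : Finset ι) (f : ι → (Fin r → ZMod k)) (j : ZMod (2*r)) :
    Phi r k (∑ i ∈ s, f i) j = ∑ i ∈ s, Phi r k (f i) j := by
  classical
  induction s using Finset.induction with
  | empty => simp [Phi_zero]
  | insert _ _ h ih => rw [Finset.sum_insert h, Finset.sum_insert h, Phi_add, ih]

lemma Dd_cast (hr : 0 < r) (t : Fin r) :
    Dd r k (((t : ℕ) : ZMod (2*r))) = Pi.single t (1 : ZMod k) := by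
  haveI : NeZero (2*r) := ⟨by omega⟩
  have hv : (((t : ℕ) : ZMod (2*r))).val = (t : ℕ) := ZMod.val_cast_of_lt (by omega)
  rw [Dform r k hr, dif_pos (by omega)]
  congr 1
  ext1
  simp only [hv, Pi.single_apply, Fin.ext_iff]
  all_goals split_ifs <;> first | rfl | (exfalso; omega)

lemma Phi_apply_zero (hr : 0 < r) (a : Fin r → ZMod k) : Phi r k a 0 = a := by
  simp only [Phi, sub_zero]
  calc ∑ t : Fin r, a t • Dd r k (((t : ℕ) : ZMod (2*r)))
      = ∑ t : Fin r, Pi.single t (a t) := by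
        refine Finset.sum_congr rfl fun t _ => ?_
        rw [Dd_cast r k hr, ← Pi.single_smul, smul_eq_mul, mul_one]
    _ = a := Finset.univ_sum_single a

lemma lemA' (hr : 0 < r) (u j : ZMod (2*r)) :
    Dd r k (u - j) = Phi r k (Dd r k u) j := by
  haveI : NeZero (2*r) := ⟨by omega⟩
  have hval : u.val < 2*r := u.val_lt
  rw [Dform r k hr u]
  by_cases hc : u.val < r
  · rw [dif_pos hc]
    unfold Phi
    have key : ∀ t : Fin r, (Pi.single (⟨u.val, hc⟩ : Fin r) (1 : ZMod k) : Fin r → ZMod k) t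
        • Dd r k (((t : ℕ) : ZMod (2*r)) - j)
        = if t = ⟨u.val, hc⟩ then Dd r k (((t : ℕ) : ZMod (2*r)) - j) else 0 := by
      intro t
      rw [Pi.single_apply]
      split_ifs <;> simp
    rw [Finset.sum_congr rfl fun t _ => key t, Finset.sum_ite_eq' Finset.univ]
    simp only [Finset.mem_univ, if_true]
    congr 2
    exact (ZMod.natCast_rightInverse u).symm ▸ rfl
  · rw [dif_neg hc]
    unfold Phi
    set t₀ : Fin r := ⟨u.val - r, by omega⟩ with ht₀
    have key : ∀ t : Fin r, (-(Pi.single t₀ (1 : ZMod k) : Fin r → ZMod k)) t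
        • Dd r k (((t : ℕ) : ZMod (2*r)) - j)
        = if t = t₀ then -Dd r k (((t : ℕ) : ZMod (2*r)) - j) else 0 := by
      intro t
      rw [Pi.neg_apply, Pi.single_apply]
      split_ifs <;> simp
    rw [Finset.sum_congr rfl fun t _ => key t, Finset.sum_ite_eq' Finset.univ]
    simp only [Finset.mem_univ, if_true]
    have hn : u.val - r + r = u.val := by omega
    have hu : ((u.val - r : ℕ) : ZMod (2*r)) + (r : ZMod (2*r)) = u := by
      rw [← Nat.cast_add]
      exact (congrArg _ hn).trans (ZMod.natCast_rightInverse u)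
    have h4 : u - j = (((u.val - r : ℕ) : ZMod (2*r)) - j) + (r : ZMod (2*r)) := by
      linear_combination -hu
    rw [h4, anti r k hr]

lemma lemA (hr : 0 < r) (i j : ZMod (2*r)) :
    cfree r k (i - j) - cfree r k (-j) = Phi r k (cfree r k i) j := by
  haveI : NeZero (2*r) := ⟨by omega⟩
  suffices H : ∀ N : ℕ, ∀ j : ZMod (2*r),
      cfree r k ((N : ZMod (2*r)) - j) - cfree r k (-j) = Phi r k (cfree r k (N : ZMod (2*r))) j by
    have := H i.val j
    rwa [ZMod.natCast_rightInverse i] at this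
  intro N
  induction N with
  | zero =>
    intro j
    simp only [Nat.cast_zero, zero_sub, c_zero r k hr, Phi_zero, sub_self]
  | succ N ih =>
    intro j
    have hstep : ((N + 1 : ℕ) : ZMod (2*r)) - j = ((N : ZMod (2*r)) - j) + 1 := by
      push_cast; ring
    have hN1 : ((N + 1 : ℕ) : ZMod (2*r)) = ((N : ZMod (2*r)) + 1) := by push_cast; ring
    have hD : cfree r k (((N : ZMod (2*r)) - j) + 1)
        = Dd r k ((N : ZMod (2*r)) - j) + cfree r k ((N : ZMod (2*r)) - j) := by
      rw [Dd]; abel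
    have hD2 : cfree r k ((N : ZMod (2*r)) + 1)
        = Dd r k ((N : ZMod (2*r))) + cfree r k ((N : ZMod (2*r))) := by
      rw [Dd]; abel
    rw [hstep, hN1, hD, hD2, Phi_add, ← lemA' r k hr _ j, ← ih j]
    abel

/-- the cocycle property -/
lemma cocycle (hr : 0 < r) (a : Fin r → ZMod k) (u j : ZMod (2*r)) :
    Phi r k (Phi r k a u) j = Phi r k a (j + u) := by
  have e1 : Phi r k a u = ∑ t : Fin r, a t • Dd r k (((t:ℕ):ZMod (2*r)) - u) := rfl
  rw [e1, Phi_sum]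
  have e2 : ∀ t : Fin r, Phi r k (a t • Dd r k (((t:ℕ):ZMod (2*r)) - u)) j
      = a t • Dd r k (((t:ℕ):ZMod (2*r)) - (j + u)) := by
    intro t
    rw [Phi_smul, ← lemA' r k hr _ j]
    congr 2
    ring
  rw [Finset.sum_congr rfl fun t _ => e2 t]
  rfl

/-! ### Permutation level -/

/-- translation permutation -/
def trE {G : Type*} [AddCommGroup G] {n : ℕ} (d : ZMod n → G) :
    Equiv.Perm (G × ZMod n) where
  toFun p := (p.1 + d p.2, p.2)
  invFun p := (p.1 - d p.2, p.2)
  left_inv p := by simp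
  right_inv p := by simp

/-- the shift permutation -/
def sft {G : Type*} [AddCommGroup G] {n : ℕ} : Equiv.Perm (G × ZMod n) where
  toFun p := (p.1, p.2 + 1)
  invFun p := (p.1, p.2 - 1)
  left_inv p := by simp
  right_inv p := by simp

lemma trE_apply {G : Type*} [AddCommGroup G] {n : ℕ} (d : ZMod n → G) (p : G × ZMod n) :
    trE d p = (p.1 + d p.2, p.2) := rfl

lemma trE_mul {G : Type*} [AddCommGroup G] {n : ℕ} (d e : ZMod n → G) :
    trE d * trE e = trE (d + e) := by
  ext p <;> simp [trE, Equiv.Perm.mul_apply] <;> abel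

lemma trE_zero {G : Type*} [AddCommGroup G] {n : ℕ} : trE (0 : ZMod n → G) = 1 := by
  ext p <;> simp [trE]

lemma trE_inv {G : Type*} [AddCommGroup G] {n : ℕ} (d : ZMod n → G) :
    (trE d)⁻¹ = trE (-d) := by
  apply inv_eq_of_mul_eq_one_right
  rw [trE_mul, add_neg_cancel, trE_zero]

end PropAux

namespace PropAux

variable (r k : ℕ)

lemma sft_pow {G : Type*} [AddCommGroup G] {n : ℕ} (l : ℕ) (p : G × ZMod n) :
    ((sft : Equiv.Perm (G × ZMod n)) ^ l) p = (p.1, p.2 + l) := by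
  induction l with
  | zero => simp [sft]
  | succ l ih =>
    rw [pow_succ', Equiv.Perm.mul_apply, ih]
    show (p.1, (p.2 + l) + 1) = _
    rw [Prod.mk.injEq]
    refine ⟨rfl, ?_⟩
    push_cast
    rw [add_assoc]

/-- the key generator identity: `σ_x σ_y⁻¹` is the translation by `Φ(c(x₂) - c(y₂))`. -/
lemma gen_eq (hr : 0 < r) (x y : (Fin r → ZMod k) × ZMod (2*r)) :
    SσE (cfree r k) x * (SσE (cfree r k) y)⁻¹ = trE (Phi r k (cfree r k x.2 - cfree r k y.2)) := by
  refine Equiv.ext fun p => Prod.ext ?_ ?_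
  · show ((p.1 - cfree r k (y.2 - p.2) + cfree r k (-p.2)) +
        cfree r k (x.2 - (p.2 - 1) - 1) - cfree r k (-(p.2 - 1) - 1)) = _
    have h1 : x.2 - (p.2 - 1) - 1 = x.2 - p.2 := by ring
    have h2 : -(p.2 - 1) - 1 = -p.2 := by ring
    rw [h1, h2, trE_apply]
    have hx := lemA r k hr x.2 p.2
    have hy := lemA r k hr y.2 p.2
    rw [Phi_sub, ← hx, ← hy]
    abel
  · show (p.2 - 1) + 1 = p.2
    ring

/-- `σ_x = sft * trE (Φ (Φ (c x₂) 1))`. -/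
lemma sigma_eq (hr : 0 < r) (x : (Fin r → ZMod k) × ZMod (2*r)) :
    SσE (cfree r k) x = sft * trE (Phi r k (Phi r k (cfree r k x.2) 1)) := by
  refine Equiv.ext fun p => Prod.ext ?_ ?_
  · show p.1 + cfree r k (x.2 - p.2 - 1) - cfree r k (-p.2 - 1) = _
    show _ = p.1 + Phi r k (Phi r k (cfree r k x.2) 1) p.2
    have h1 : x.2 - p.2 - 1 = x.2 - (p.2 + 1) := by ring
    have h2 : -p.2 - 1 = -(p.2 + 1) := by ring
    rw [h1, h2, cocycle r k hr, ← lemA r k hr x.2 (p.2 + 1)]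
    abel
  · rfl

/-- `σ_{(0,0)}` is the shift. -/
lemma sigma_zero (hr : 0 < r) :
    SσE (cfree r k) (0, (0 : ZMod (2*r))) = (sft : Equiv.Perm ((Fin r → ZMod k) × ZMod (2*r))) := by
  refine Equiv.ext fun p => Prod.ext ?_ ?_
  · show p.1 + cfree r k (0 - p.2 - 1) - cfree r k (-p.2 - 1) = p.1
    have h1 : (0 : ZMod (2*r)) - p.2 - 1 = -p.2 - 1 := by ring
    rw [h1]
    abel
  · rfl

lemma Phi_add' (a b : Fin r → ZMod k) : Phi r k (a + b) = Phi r k a + Phi r k b :=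
  funext fun j => Phi_add r k a b j

lemma Phi_zero' : Phi r k (0 : Fin r → ZMod k) = 0 := funext fun j => Phi_zero r k j

lemma Phi_neg' (a : Fin r → ZMod k) : Phi r k (-a) = - Phi r k a :=
  funext fun j => Phi_neg r k a j

/-- the homomorphism `a ↦ trE (Φ a)` -/
def psi : Multiplicative (Fin r → ZMod k) →* Equiv.Perm ((Fin r → ZMod k) × ZMod (2*r)) :=
  MonoidHom.mk' (fun a => trE (Phi r k a.toAdd))
    (fun a b => by
      show trE (Phi r k (a.toAdd + b.toAdd)) = _
      rw [Phi_add', ← trE_mul])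

lemma psi_apply (a : Multiplicative (Fin r → ZMod k)) :
    psi r k a = trE (Phi r k a.toAdd) := rfl

lemma Dd_mem (hr : 0 < r) (u : ZMod (2*r)) :
    trE (Phi r k (Dd r k u)) ∈ SDis (cfree r k) := by
  have h := gen_eq r k hr ((0 : Fin r → ZMod k), u + 1) (0, u)
  have hmem : SσE (cfree r k) ((0 : Fin r → ZMod k), u + 1) * (SσE (cfree r k) (0, u))⁻¹
      ∈ SDis (cfree r k) :=
    Subgroup.subset_closure ⟨_, _, rfl⟩
  rwa [h] at hmem

lemma decomp (hr : 0 < r) (hk : 0 < k) (a : Fin r → ZMod k) :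
    a = ∑ t : Fin r, ((a t).val) • Dd r k ((t : ℕ) : ZMod (2*r)) := by
  haveI : NeZero k := ⟨by omega⟩
  have : ∀ t : Fin r, ((a t).val) • Dd r k ((t : ℕ) : ZMod (2*r)) = Pi.single t (a t) := by
    intro t
    rw [Dd_cast r k hr, ← Pi.single_smul]
    congr 1
    rw [nsmul_eq_mul, mul_one, ZMod.natCast_val, ZMod.cast_id]
  rw [Finset.sum_congr rfl fun t _ => this t, Finset.univ_sum_single]

lemma range_le_dis (hr : 0 < r) (hk : 0 < k) (a : Fin r → ZMod k) :
    trE (Phi r k a) ∈ SDis (cfree r k) := by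
  let S : AddSubgroup (Fin r → ZMod k) :=
    { carrier := {a | trE (Phi r k a) ∈ SDis (cfree r k)}
      zero_mem' := by
        show trE (Phi r k 0) ∈ SDis (cfree r k)
        rw [Phi_zero', trE_zero]
        exact one_mem _
      add_mem' := by
        intro a b ha hb
        show trE (Phi r k (a + b)) ∈ SDis (cfree r k)
        rw [Phi_add', ← trE_mul]
        exact mul_mem ha hb
      neg_mem' := by
        intro a ha
        show trE (Phi r k (-a)) ∈ SDis (cfree r k)
        rw [Phi_neg', ← trE_inv]
        exact inv_mem ha }
  have : a ∈ S := by
    rw [decomp r k hr hk a]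
    exact AddSubgroup.sum_mem S fun t _ =>
      AddSubgroup.nsmul_mem S (Dd_mem r k hr _) _
  exact this

lemma dis_eq_range (hr : 0 < r) (hk : 0 < k) :
    SDis (cfree r k) = (psi r k).range := by
  apply le_antisymm
  · rw [SDis]
    apply Subgroup.closure_le _ |>.mpr
    rintro g ⟨x, y, rfl⟩
    exact ⟨Multiplicative.ofAdd (cfree r k x.2 - cfree r k y.2), (gen_eq r k hr x y).symm⟩
  · rintro g ⟨a, rfl⟩
    exact range_le_dis r k hr hk a.toAdd

lemma psi_injective (hr : 0 < r) : Function.Injective (psi r k) := by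
  intro a b hab
  have h := congrArg (fun (g : Equiv.Perm ((Fin r → ZMod k) × ZMod (2*r))) =>
    (g ((0 : Fin r → ZMod k), (0 : ZMod (2*r)))).1) hab
  simp only [psi_apply, trE_apply, zero_add] at h
  rw [Phi_apply_zero r k hr, Phi_apply_zero r k hr] at h
  exact Multiplicative.toAdd.injective h

lemma sft_order (hr : 0 < r) :
    (sft : Equiv.Perm ((Fin r → ZMod k) × ZMod (2*r))) ^ (2*r) = 1 := by
  apply Equiv.ext
  intro p
  rw [sft_pow]
  show (p.1, p.2 + ((2*r : ℕ) : ZMod (2*r))) = p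
  rw [ZMod.natCast_self, add_zero]

lemma move_step (hr : 0 < r) (b : Fin r → ZMod k) :
    trE (Phi r k b) * (sft : Equiv.Perm ((Fin r → ZMod k) × ZMod (2*r)))
      = sft * trE (Phi r k (Phi r k b 1)) := by
  refine Equiv.ext fun p => Prod.ext ?_ ?_
  · show p.1 + Phi r k b (p.2 + 1) = p.1 + Phi r k (Phi r k b 1) p.2
    rw [cocycle r k hr]
  · rfl

lemma move (hr : 0 < r) (l : ℕ) (b : Fin r → ZMod k) :
    trE (Phi r k b) * (sft : Equiv.Perm ((Fin r → ZMod k) × ZMod (2*r))) ^ l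
      = sft ^ l * trE (Phi r k (Phi r k b (l : ZMod (2*r)))) := by
  induction l with
  | zero =>
    simp only [pow_zero, one_mul, mul_one, Nat.cast_zero]
    rw [Phi_apply_zero r k hr]
  | succ l ih =>
    rw [pow_succ, ← mul_assoc, ih, mul_assoc, move_step r k hr, ← mul_assoc, ← pow_succ]
    congr 2
    rw [cocycle r k hr]
    push_cast
    rw [add_comm (1 : ZMod (2*r))]

/-- the subgroup of elements of the form `sft^l * trE (Φ a)` -/
def Jgrp (hr : 0 < r) : Subgroup (Equiv.Perm ((Fin r → ZMod k) × ZMod (2*r))) where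
  carrier := {g | ∃ (l : ℕ) (a : Fin r → ZMod k), g = sft ^ l * trE (Phi r k a)}
  one_mem' := ⟨0, 0, by rw [pow_zero, one_mul, Phi_zero', trE_zero]⟩
  mul_mem' := by
    rintro f g ⟨l, a, rfl⟩ ⟨m, b, rfl⟩
    refine ⟨l + m, Phi r k a (m : ZMod (2*r)) + b, ?_⟩
    rw [mul_assoc, ← mul_assoc (trE (Phi r k a)), move r k hr, mul_assoc, trE_mul,
      ← Phi_add', ← mul_assoc, ← pow_add]
  inv_mem' := by
    rintro f ⟨l, a, rfl⟩
    refine ⟨l * (2*r - 1), Phi r k (-a) ((l * (2*r - 1) : ℕ) : ZMod (2*r)), ?_⟩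
    have hinv : (sft : Equiv.Perm ((Fin r → ZMod k) × ZMod (2*r))) ^ l
        * sft ^ (l * (2*r - 1)) = 1 := by
      rw [← pow_add]
      have : l + l * (2*r - 1) = (2*r) * l := by
        have : 1 ≤ 2*r := by omega
        calc l + l * (2*r - 1) = l * (1 + (2*r - 1)) := by ring
        _ = l * (2*r) := by rw [Nat.add_sub_cancel' this]
        _ = (2*r) * l := by ring
      rw [this, pow_mul, sft_order r k hr, one_pow]
    rw [mul_inv_rev, trE_inv, ← Phi_neg', ← move r k hr,
      inv_eq_of_mul_eq_one_right hinv]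

lemma gx_le_J (hr : 0 < r) : SGX (cfree r k) ≤ Jgrp r k hr := by
  rw [SGX]
  apply Subgroup.closure_le _ |>.mpr
  rintro g ⟨x, rfl⟩
  exact ⟨1, Phi r k (cfree r k x.2) 1, by rw [pow_one, ← sigma_eq r k hr]⟩

lemma sft_mem_gx (hr : 0 < r) :
    (sft : Equiv.Perm ((Fin r → ZMod k) × ZMod (2*r))) ∈ SGX (cfree r k) := by
  rw [← sigma_zero r k hr]
  exact Subgroup.subset_closure (Set.mem_range_self _)

lemma dis_le_gx : SDis (cfree r k) ≤ SGX (cfree r k) := by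
  rw [SDis]
  apply Subgroup.closure_le _ |>.mpr
  rintro g ⟨x, y, rfl⟩
  exact mul_mem (Subgroup.subset_closure (Set.mem_range_self _))
    (inv_mem (Subgroup.subset_closure (Set.mem_range_self _)))

end PropAux

open PropAux

/-- For the free-module construction, the stabilizer of `(0,0)` in the displacement group is
trivial, `Dis(X) ≅ G`, and the solution `S(G × ℤ/2rℤ, c)` is uniconnected: its permutation
group acts regularly. -/
theorem construction_free_module_uniconnected (r k : ℕ) (hr : 0 < r) (hk : 0 < k) :
    (∀ g ∈ SDis (cfree r k),
      g ((0 : Fin r → ZMod k), (0 : ZMod (2 * r))) = (0, 0) → g = 1) ∧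
    Nonempty (SDis (cfree r k) ≃* Multiplicative (Fin r → ZMod k)) ∧
    (∀ p q : (Fin r → ZMod k) × ZMod (2 * r), ∃ g ∈ SGX (cfree r k), g p = q) ∧
    (∀ g ∈ SGX (cfree r k), ∀ p : (Fin r → ZMod k) × ZMod (2 * r), g p = p → g = 1) := by
  haveI : NeZero (2*r) := ⟨by omega⟩
  refine ⟨?_, ?_, ?_, ?_⟩
  · -- triviality of the stabilizer of (0,0) in Dis
    intro g hg h0
    rw [dis_eq_range r k hr hk] at hg
    obtain ⟨a, rfl⟩ := hg
    have h1 := congrArg Prod.fst h0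
    rw [psi_apply, trE_apply] at h1
    simp only [zero_add] at h1
    rw [Phi_apply_zero r k hr] at h1
    have ha : a = 1 := Multiplicative.toAdd.injective h1
    rw [ha, map_one]
  · -- Dis ≅ G
    exact ⟨(MulEquiv.subgroupCongr (dis_eq_range r k hr hk)).trans
      (MonoidHom.ofInjective (psi_injective r k hr)).symm⟩
  · -- transitivity
    intro p q
    refine ⟨sft ^ (q.2 - p.2).val * trE (Phi r k (Phi r k (q.1 - p.1) (-p.2))), ?_, ?_⟩
    · exact mul_mem (pow_mem (sft_mem_gx r k hr) _)
        (dis_le_gx r k (range_le_dis r k hr hk _))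
    · rw [Equiv.Perm.mul_apply, trE_apply, sft_pow]
      show ((p.1 + Phi r k (Phi r k (q.1 - p.1) (-p.2)) p.2 : Fin r → ZMod k),
        (p.2 + ((q.2 - p.2).val : ZMod (2*r)) : ZMod (2*r))) = q
      rw [cocycle r k hr, add_neg_cancel, Phi_apply_zero r k hr,
        ZMod.natCast_val, ZMod.cast_id]
      show (p.1 + (q.1 - p.1), p.2 + (q.2 - p.2)) = q
      rw [Prod.mk.injEq]
      constructor <;> abel
  · -- freeness
    intro g hg p hp
    obtain ⟨l, a, hgla⟩ := gx_le_J r k hr hg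
    subst hgla
    rw [Equiv.Perm.mul_apply, trE_apply, sft_pow] at hp
    have h2 := congrArg Prod.snd hp
    have h1 := congrArg Prod.fst hp
    simp only at h1 h2
    have hl : ((l : ℕ) : ZMod (2*r)) = 0 := by
      have h3 : p.2 + ((l : ℕ) : ZMod (2*r)) = p.2 + 0 := by rw [add_zero]; exact h2
      exact add_left_cancel h3
    have hPhi : Phi r k a p.2 = 0 := by
      have h3 : p.1 + Phi r k a p.2 = p.1 + 0 := by rw [add_zero]; exact h1
      exact add_left_cancel h3
    have ha : a = 0 := by
      have hc := cocycle r k hr a p.2 (-p.2)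
      rw [neg_add_cancel, Phi_apply_zero r k hr, hPhi, Phi_zero'] at hc
      exact hc.symm
    rw [ha, Phi_zero', trE_zero, mul_one]
    apply Equiv.ext
    intro q
    rw [sft_pow, hl, add_zero]
    simp
end

section
/- Every finite abelian group embeds into the permutation group of some finite indecomposable uniconnected non-degenerate involutive solution of the Yang–Baxter equation of multipermutation level at most 2. -/
set_option maxHeartbeats 1000000
set_option linter.unusedSectionVars false

instance AddAut.instGroupOld (M : Type*) [AddCommGroup M] : Group (AddAut M) where
  mul g h := h.trans g
  one := AddEquiv.refl _
  inv := AddEquiv.symm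
  mul_assoc _ _ _ := rfl
  one_mul _ := rfl
  mul_one _ := rfl
  inv_mul_cancel := AddEquiv.self_trans_symm

theorem AddAut.inv_apply_self' {M : Type*} [AddCommGroup M] (e : AddAut M) (a : M) :
    e (e⁻¹ a) = a := e.apply_symm_apply a

theorem AddAut.apply_inv_self' {M : Type*} [AddCommGroup M] (e : AddAut M) (a : M) :
    e⁻¹ (e a) = a := e.symm_apply_apply a

theorem AddAut.mul_apply' {M : Type*} [AddCommGroup M] (e₁ e₂ : AddAut M) (a : M) :
    (e₁ * e₂) a = e₁ (e₂ a) := rfl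

@[simp]
theorem AddAut.one_apply' {M : Type*} [AddCommGroup M] (a : M) : (1 : AddAut M) a = a := rfl

section General

variable {m : ℕ} [NeZero m] {M : Type*} [AddCommGroup M]

/-- σ_{(v,i)}(w,j) = (f i + t w, j+1) -/
def sigmaP (t : AddAut M) (f : ZMod m → M) (p : M × ZMod m) : Equiv.Perm (M × ZMod m) where
  toFun q := (f p.2 + t q.1, q.2 + 1)
  invFun q := (t⁻¹ (q.1 - f p.2), q.2 - 1)
  left_inv q := by
    refine Prod.ext ?_ (by ring)
    show t⁻¹ (f p.2 + t q.1 - f p.2) = q.1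
    rw [add_sub_cancel_left, AddAut.apply_inv_self']
  right_inv q := by
    refine Prod.ext ?_ (by ring)
    show f p.2 + t (t⁻¹ (q.1 - f p.2)) = q.1
    rw [AddAut.inv_apply_self', add_sub_cancel]

def tauP (t : AddAut M) (f : ZMod m → M) (p : M × ZMod m) : Equiv.Perm (M × ZMod m) where
  toFun q := (t⁻¹ (q.1 - f (p.2 + 1)), q.2 - 1)
  invFun q := (f (p.2 + 1) + t q.1, q.2 + 1)
  left_inv q := by
    refine Prod.ext ?_ (by ring)
    show f (p.2 + 1) + t (t⁻¹ (q.1 - f (p.2 + 1))) = q.1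
    rw [AddAut.inv_apply_self', add_sub_cancel]
  right_inv q := by
    refine Prod.ext ?_ (by ring)
    show t⁻¹ (f (p.2 + 1) + t q.1 - f (p.2 + 1)) = q.1
    rw [add_sub_cancel_left, AddAut.apply_inv_self']

theorem f_eq (t : AddAut M) (f : ZMod m → M)
    (hrec : ∀ a : ZMod m, f (a + 1) = f 1 + t (f a)) (a : ZMod m) :
    f a = f 1 + t (f (a - 1)) := by
  have := hrec (a - 1); rwa [sub_add_cancel] at this

def mySol (t : AddAut M) (f : ZMod m → M)
    (hrec : ∀ a : ZMod m, f (a + 1) = f 1 + t (f a)) : YBSol (M × ZMod m) where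
  σ := sigmaP t f
  τ := tauP t f
  invol := by
    rintro ⟨⟨v, i⟩, ⟨w, j⟩⟩
    simp only [rmapP, sigmaP, tauP, Equiv.coe_fn_mk]
    refine Prod.ext (Prod.ext ?_ (by ring)) (Prod.ext ?_ (by ring))
    · show f (j + 1) + t (t⁻¹ (v - f (j + 1))) = v
      rw [AddAut.inv_apply_self']; abel
    · show t⁻¹ (f i + t w - f (i - 1 + 1)) = w
      rw [sub_add_cancel]
      have h : f i + t w - f i = t w := by abel
      rw [h, AddAut.apply_inv_self']
  braid := by
    rintro ⟨⟨v, i⟩, ⟨w, j⟩, ⟨s, k⟩⟩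
    simp only [r12P, r23P, sigmaP, tauP, Equiv.coe_fn_mk]
    refine Prod.ext (Prod.ext ?_ (by ring)) (Prod.ext (Prod.ext ?_ (by ring))
      (Prod.ext ?_ (by ring)))
    · show f (j + 1) + t (f (i - 1) + t s) = f i + t (f j + t s)
      rw [hrec j, f_eq t f hrec i]
      simp only [map_add]
      abel
    · show t⁻¹ (f i + t w - f (k + 1 + 1)) = f (i - 1) + t (t⁻¹ (w - f (k + 1)))
      rw [AddAut.inv_apply_self', f_eq t f hrec i, hrec (k + 1)]
      have h : f 1 + t (f (i - 1)) + t w - (f 1 + t (f (k + 1))) =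
          t (f (i - 1) + (w - f (k + 1))) := by simp only [map_add, map_sub]; abel
      rw [h, AddAut.apply_inv_self']
    · show t⁻¹ (t⁻¹ (v - f (j + 1)) - f (k + 1)) =
        t⁻¹ (t⁻¹ (v - f (k + 1 + 1)) - f (j - 1 + 1))
      rw [sub_add_cancel, hrec j, hrec (k + 1)]
      congr 1
      have h1 : v - (f 1 + t (f j)) = (v - f 1) - t (f j) := by abel
      have h2 : v - (f 1 + t (f (k + 1))) = (v - f 1) - t (f (k + 1)) := by abel
      rw [h1, h2]
      simp only [map_sub, AddAut.apply_inv_self']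
      abel

theorem mySol_MPL2 (t : AddAut M) (f : ZMod m → M)
    (hrec : ∀ a : ZMod m, f (a + 1) = f 1 + t (f a)) : (mySol t f hrec).MPL2 :=
  fun _ _ _ => rfl

/-- translation permutation -/
def Tperm (v : M) : Equiv.Perm (M × ZMod m) :=
  Equiv.prodCongr (Equiv.addLeft v) (Equiv.refl _)

theorem Tperm_apply (v : M) (q : M × ZMod m) : Tperm v q = (v + q.1, q.2) := rfl

theorem Tperm_zero : (Tperm (0 : M) : Equiv.Perm (M × ZMod m)) = 1 := by
  apply Equiv.ext; intro q
  simp [Tperm_apply]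

theorem Tperm_add (v w : M) :
    (Tperm (v + w) : Equiv.Perm (M × ZMod m)) = Tperm v * Tperm w := by
  apply Equiv.ext; intro q
  simp [Tperm_apply, Equiv.Perm.mul_apply]
  abel

theorem Tperm_neg (v : M) : (Tperm (-v) : Equiv.Perm (M × ZMod m)) = (Tperm v)⁻¹ := by
  have h : (Tperm (-v) : Equiv.Perm (M × ZMod m)) * Tperm v = 1 := by
    rw [← Tperm_add, neg_add_cancel, Tperm_zero]
  exact eq_inv_of_mul_eq_one_left h

/-- affine permutations -/
def Lperm (t : AddAut M) (v : M) (k : ℕ) : Equiv.Perm (M × ZMod m) :=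
  Equiv.prodCongr (((t ^ k).toEquiv).trans (Equiv.addLeft v)) (Equiv.addRight (k : ZMod m))

theorem Lperm_apply (t : AddAut M) (v : M) (k : ℕ) (q : M × ZMod m) :
    Lperm t v k q = (v + (t ^ k) q.1, q.2 + (k : ZMod m)) := rfl

theorem sigmaP_eq_Lperm (t : AddAut M) (f : ZMod m → M) (p : M × ZMod m) :
    sigmaP t f p = Lperm t (f p.2) 1 := by
  apply Equiv.ext; intro q
  simp [sigmaP, Lperm_apply]

theorem Lperm_mul (t : AddAut M) (v w : M) (k l : ℕ) :
    (Lperm t v k : Equiv.Perm (M × ZMod m)) * Lperm t w l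
      = Lperm t (v + (t ^ k) w) (k + l) := by
  apply Equiv.ext; intro q
  refine Prod.ext ?_ ?_
  · show v + (t ^ k) (w + (t ^ l) q.1) = v + (t ^ k) w + (t ^ (k + l)) q.1
    rw [pow_add, map_add, AddAut.mul_apply']
    abel
  · show q.2 + (l : ZMod m) + (k : ZMod m) = q.2 + ((k + l : ℕ) : ZMod m)
    push_cast
    ring

theorem Lperm_one (t : AddAut M) (htm : t ^ m = 1) (k : ℕ) (hk : (m : ℕ) ∣ k) :
    (Lperm t (0 : M) k : Equiv.Perm (M × ZMod m)) = 1 := by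
  obtain ⟨c, rfl⟩ := hk
  have h1 : t ^ (m * c) = 1 := by rw [pow_mul, htm, one_pow]
  have h2 : ((m * c : ℕ) : ZMod m) = 0 := by
    push_cast [ZMod.natCast_self]
    ring
  apply Equiv.ext; intro q
  rw [Lperm_apply, h1, h2]
  simp

theorem mem_closure_Lperm (t : AddAut M) (f : ZMod m → M) (htm : t ^ m = 1)
    (g : Equiv.Perm (M × ZMod m))
    (hg : g ∈ Subgroup.closure (Set.range (sigmaP t f))) :
    ∃ v k, g = Lperm t v k := by
  induction hg using Subgroup.closure_induction with
  | mem g hg =>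
      obtain ⟨p, rfl⟩ := hg
      exact ⟨f p.2, 1, sigmaP_eq_Lperm t f p⟩
  | one => exact ⟨0, m, (Lperm_one t htm m dvd_rfl).symm⟩
  | mul a b _ _ ha hb =>
      obtain ⟨v, k, rfl⟩ := ha
      obtain ⟨w, l, rfl⟩ := hb
      exact ⟨v + (t ^ k) w, k + l, Lperm_mul t v w k l⟩
  | inv a _ ha =>
      obtain ⟨v, k, rfl⟩ := ha
      have hm : m - 1 + 1 = m := Nat.succ_pred_eq_of_pos (Nat.pos_of_ne_zero (NeZero.ne m))
      have hsum : k + k * (m - 1) = m * k := by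
        calc k + k * (m - 1) = k * (m - 1 + 1) := by ring
        _ = m * k := by rw [hm]; ring
      have h : (Lperm t v k : Equiv.Perm (M × ZMod m)) * Lperm t (-((t ^ k)⁻¹ v)) (k * (m - 1))
          = 1 := by
        rw [Lperm_mul, map_neg, AddAut.inv_apply_self', add_neg_cancel, hsum]
        exact Lperm_one t htm _ ⟨k, rfl⟩
      exact ⟨_, _, inv_eq_of_mul_eq_one_right h⟩

theorem mySol_free (t : AddAut M) (f : ZMod m → M) (htm : t ^ m = 1)
    (g : Equiv.Perm (M × ZMod m))
    (hg : g ∈ Subgroup.closure (Set.range (sigmaP t f)))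
    (p : M × ZMod m) (hp : g p = p) : g = 1 := by
  obtain ⟨v, k, rfl⟩ := mem_closure_Lperm t f htm g hg
  rw [Lperm_apply] at hp
  have h2 : p.2 + (k : ZMod m) = p.2 := congrArg Prod.snd hp
  have hk : (k : ZMod m) = 0 := add_eq_left.mp h2
  have hdvd : (m : ℕ) ∣ k := (ZMod.natCast_eq_zero_iff k m).mp hk
  obtain ⟨c, rfl⟩ := hdvd
  have h1 : t ^ (m * c) = 1 := by rw [pow_mul, htm, one_pow]
  have hv : v + p.1 = p.1 := by
    have := congrArg Prod.fst hp
    rwa [h1] at this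
  have hv0 : v = 0 := add_eq_right.mp hv
  rw [hv0]
  exact Lperm_one t htm _ ⟨c, rfl⟩

theorem Tperm_diff_eq (t : AddAut M) (f : ZMod m → M) (a b : ZMod m) :
    (Tperm (f b - f a) : Equiv.Perm (M × ZMod m)) =
      sigmaP t f (0, b) * (sigmaP t f (0, a))⁻¹ := by
  apply Equiv.ext; intro q
  rw [Equiv.Perm.mul_apply]
  have h : (sigmaP t f (0, a))⁻¹ q = (t⁻¹ (q.1 - f a), q.2 - 1) := rfl
  rw [h]
  refine Prod.ext ?_ ?_
  · show f b - f a + q.1 = f b + t (t⁻¹ (q.1 - f a))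
    rw [AddAut.inv_apply_self']; abel
  · show q.2 = q.2 - 1 + 1
    rw [sub_add_cancel]

theorem Tperm_diff_mem (t : AddAut M) (f : ZMod m → M) (a b : ZMod m) :
    (Tperm (f b - f a) : Equiv.Perm (M × ZMod m)) ∈
      Subgroup.closure (Set.range (sigmaP t f)) := by
  rw [Tperm_diff_eq]
  exact mul_mem (Subgroup.subset_closure ⟨(0, b), rfl⟩)
    (inv_mem (Subgroup.subset_closure ⟨(0, a), rfl⟩))

theorem mySol_trans (t : AddAut M) (f : ZMod m → M) (htm : t ^ m = 1) (hf0 : f 0 = 0)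
    (hgen : ∀ v : M, (Tperm v : Equiv.Perm (M × ZMod m)) ∈
      Subgroup.closure (Set.range (sigmaP t f)))
    (p q : M × ZMod m) :
    ∃ g ∈ Subgroup.closure (Set.range (sigmaP t f)), g p = q := by
  have hσ0 : sigmaP t f ((0 : M), (0 : ZMod m)) = Lperm t 0 1 := by
    rw [sigmaP_eq_Lperm]
    show Lperm t (f 0) 1 = Lperm t 0 1
    rw [hf0]
  have hpow : ∀ c : ℕ, (Lperm t (0 : M) 1 : Equiv.Perm (M × ZMod m)) ^ c = Lperm t 0 c := by
    intro c
    induction c with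
    | zero =>
        rw [pow_zero]
        exact (Lperm_one t htm 0 (dvd_zero m)).symm
    | succ n ih =>
        rw [pow_succ, ih, Lperm_mul, map_zero, add_zero]
  set c := (q.2 - p.2).val with hc
  refine ⟨Tperm (q.1 - (t ^ c) p.1) * Lperm t 0 c, ?_, ?_⟩
  · refine mul_mem (hgen _) ?_
    rw [← hpow, ← hσ0]
    exact pow_mem (Subgroup.subset_closure (Set.mem_range_self ((0 : M), (0 : ZMod m)))) c
  · rw [Equiv.Perm.mul_apply, Lperm_apply, Tperm_apply]
    refine Prod.ext ?_ ?_
    · show q.1 - (t ^ c) p.1 + ((0 : M) + (t ^ c) p.1) = q.1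
      abel
    · show p.2 + ((c : ℕ) : ZMod m) = q.2
      rw [hc, ZMod.natCast_rightInverse (q.2 - p.2)]
      ring

end General


section Inst

variable (m N : ℕ) [NeZero m] [NeZero N]

/-- cyclic shift -/
def shE : (ZMod m → ZMod N) ≃+ (ZMod m → ZMod N) where
  toFun v := fun x => v (x - 1)
  invFun v := fun x => v (x + 1)
  left_inv v := by funext x; simp
  right_inv v := by funext x; simp
  map_add' v w := rfl

theorem shE_apply (v : ZMod m → ZMod N) (x : ZMod m) : shE m N v x = v (x - 1) := rfl

/-- the zero-sum subgroup -/
def DD : AddSubgroup (ZMod m → ZMod N) where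
  carrier := {v | ∑ x, v x = 0}
  add_mem' := by
    intro a b ha hb
    simp only [Set.mem_setOf_eq, Pi.add_apply] at *
    rw [Finset.sum_add_distrib, ha, hb, add_zero]
  zero_mem' := by simp
  neg_mem' := by
    intro a ha
    simp only [Set.mem_setOf_eq, Pi.neg_apply] at *
    rw [Finset.sum_neg_distrib, ha, neg_zero]

theorem shE_mem (v : ZMod m → ZMod N) (hv : v ∈ DD m N) : shE m N v ∈ DD m N := by
  show ∑ x, v (x - 1) = 0
  have h := Fintype.sum_equiv (Equiv.subRight (1 : ZMod m)) (fun x => v (x - 1)) v (fun x => rfl)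
  rw [h]; exact hv

theorem shE_symm_mem (v : ZMod m → ZMod N) (hv : v ∈ DD m N) : (shE m N).symm v ∈ DD m N := by
  show ∑ x, v (x + 1) = 0
  have h := Fintype.sum_equiv (Equiv.addRight (1 : ZMod m)) (fun x => v (x + 1)) v (fun x => rfl)
  rw [h]; exact hv

def tD : AddAut ↥(DD m N) where
  toFun v := ⟨shE m N v.1, shE_mem m N v.1 v.2⟩
  invFun v := ⟨(shE m N).symm v.1, shE_symm_mem m N v.1 v.2⟩
  left_inv v := by apply Subtype.ext; simp
  right_inv v := by apply Subtype.ext; simp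
  map_add' v w := by apply Subtype.ext; simp

theorem tD_pow_apply (k : ℕ) (v : ↥(DD m N)) (x : ZMod m) :
    (((tD m N) ^ k) v).1 x = v.1 (x - (k : ZMod m)) := by
  induction k generalizing x with
  | zero => simp
  | succ n ih =>
      rw [pow_succ', AddAut.mul_apply']
      show (((tD m N) ^ n) v).1 (x - 1) = _
      rw [ih]
      show v.1 (x - 1 - n) = v.1 (x - (n + 1 : ℕ))
      congr 1
      push_cast
      ring

theorem tD_pow_m : (tD m N) ^ m = 1 := by
  apply DFunLike.ext
  intro v
  apply Subtype.ext
  funext x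
  rw [AddAut.one_apply', tD_pow_apply]
  simp [ZMod.natCast_self]

def eV (a : ZMod m) : ZMod m → ZMod N := Pi.single a 1

theorem shE_single (a : ZMod m) (c : ZMod N) :
    shE m N (Pi.single a c) = Pi.single (a + 1) c := by
  funext x
  rw [shE_apply]
  simp only [Pi.single_apply]
  congr 1
  simp [sub_eq_iff_eq_add]

theorem sum_single (a : ZMod m) (c : ZMod N) : ∑ x, Pi.single a c x = c := by
  simp [Pi.single_apply]

def fD : ZMod m → ↥(DD m N) := fun a =>
  ⟨eV m N 0 - eV m N a, by
    show ∑ x, (eV m N 0 - eV m N a) x = 0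
    simp only [Pi.sub_apply]
    rw [Finset.sum_sub_distrib]
    unfold eV
    rw [sum_single, sum_single, sub_self]⟩

theorem fD_rec (a : ZMod m) : fD m N (a + 1) = fD m N 1 + (tD m N) (fD m N a) := by
  apply Subtype.ext
  show eV m N 0 - eV m N (a + 1) = (eV m N 0 - eV m N 1) + shE m N (eV m N 0 - eV m N a)
  rw [map_sub]
  unfold eV
  rw [shE_single, shE_single, zero_add]
  abel

theorem fD_zero : fD m N 0 = 0 := by
  apply Subtype.ext
  show eV m N 0 - eV m N 0 = 0
  rw [sub_self]

theorem sum_repr (v : ZMod m → ZMod N) (hv : ∑ x, v x = 0) :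
    ∑ a : ZMod m, (v a).val • (eV m N a - eV m N 0) = v := by
  simp only [smul_sub]
  rw [Finset.sum_sub_distrib]
  have h1 : ∑ a : ZMod m, (v a).val • eV m N a = v := by
    have : ∀ a : ZMod m, (v a).val • eV m N a = Pi.single a (v a) := by
      intro a
      unfold eV
      rw [← Pi.single_smul]
      congr 1
      rw [nsmul_eq_mul, mul_one, ZMod.natCast_rightInverse]
    rw [Finset.sum_congr rfl (fun a _ => this a)]
    exact Finset.univ_sum_single v
  have h2 : ∑ a : ZMod m, (v a).val • eV m N 0 = 0 := by
    rw [← Finset.sum_smul]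
    have : ((∑ a : ZMod m, (v a).val : ℕ) : ZMod N) = 0 := by
      rw [Nat.cast_sum]
      have h3 : ∀ a : ZMod m, (((v a).val : ℕ) : ZMod N) = v a :=
        fun a => ZMod.natCast_rightInverse _
      rw [Finset.sum_congr rfl (fun a _ => h3 a)]
      exact hv
    unfold eV
    rw [← Pi.single_smul]
    rw [nsmul_eq_mul, mul_one, this]
    simp
  rw [h1, h2, sub_zero]

end Inst


section Emb

/-- embedding `ZMod q` into `ZMod N` when `q ∣ N` -/
theorem zmod_embed (q N : ℕ) [NeZero N] (hq : q ∣ N) (hq0 : q ≠ 0) :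
    ∃ φ : ZMod q →+ ZMod N, Function.Injective φ := by
  haveI : NeZero q := ⟨hq0⟩
  have hker : ((zmultiplesHom (ZMod N)) (((N / q : ℕ) : ZMod N))) (q : ℤ) = 0 := by
    show (q : ℤ) • (((N / q : ℕ) : ZMod N)) = 0
    rw [zsmul_eq_mul]
    push_cast
    rw [← Nat.cast_mul, Nat.mul_div_cancel' hq, ZMod.natCast_self]
  refine ⟨ZMod.lift q ⟨(zmultiplesHom (ZMod N)) (((N / q : ℕ) : ZMod N)), hker⟩, ?_⟩
  rw [injective_iff_map_eq_zero]
  intro x hx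
  have hval : (((x.val : ℤ) : ZMod q)) = x := by
    push_cast
    exact ZMod.natCast_rightInverse x
  rw [← hval, ZMod.lift_coe] at hx
  have hx2 : (((x.val * (N / q) : ℕ) : ZMod N)) = 0 := by
    rw [← hx]
    show _ = (x.val : ℤ) • (((N / q : ℕ) : ZMod N))
    rw [zsmul_eq_mul]
    push_cast
    ring
  have hdvd : N ∣ x.val * (N / q) := (ZMod.natCast_eq_zero_iff _ N).mp hx2
  have hNq : q * (N / q) = N := Nat.mul_div_cancel' hq
  have hq' : 0 < N / q := Nat.div_pos (Nat.le_of_dvd (Nat.pos_of_ne_zero (NeZero.ne N)) hq)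
    (Nat.pos_of_ne_zero hq0)
  have hdvd2 : q ∣ x.val := by
    rcases hdvd with ⟨c, hc⟩
    refine ⟨c, ?_⟩
    apply Nat.eq_of_mul_eq_mul_right hq'
    rw [hc]
    nth_rewrite 1 [← hNq]
    ring
  have hv0 : x.val = 0 := Nat.eq_zero_of_dvd_of_lt hdvd2 (ZMod.val_lt x)
  rw [← hval, hv0]
  simp

theorem pi_embed (ι : Type) [Fintype ι] (n : ι → ℕ) (N : ℕ) [NeZero N]
    (h : ∀ i, n i ∣ N) (h0 : ∀ i, n i ≠ 0) :
    ∃ φ : (∀ i, ZMod (n i)) →+ (ι → ZMod N), Function.Injective φ := by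
  choose φ hφ using fun i => zmod_embed (n i) N (h i) (h0 i)
  refine ⟨{ toFun := fun v i => φ i (v i),
            map_zero' := by funext i; simp
            map_add' := by intro a b; funext i; simp }, ?_⟩
  intro a b hab
  funext i
  exact hφ i (congrFun hab i)

end Emb


section Emb2

variable (m N : ℕ) [NeZero m] [NeZero N]

theorem fD_coe (a : ZMod m) :
    ((fD m N a : ↥(DD m N)) : ZMod m → ZMod N) = eV m N 0 - eV m N a := rfl

theorem fD_diff_coe (a : ZMod m) :
    ((fD m N 0 - fD m N a : ↥(DD m N)) : ZMod m → ZMod N) = eV m N a - eV m N 0 := by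
  rw [AddSubgroup.coe_sub, fD_coe, fD_coe]
  abel

theorem Tperm_all_mem (v : ↥(DD m N)) :
    (Tperm v : Equiv.Perm (↥(DD m N) × ZMod m)) ∈
      Subgroup.closure (Set.range (sigmaP (tD m N) (fD m N))) := by
  set Gcl := Subgroup.closure (Set.range (sigmaP (tD m N) (fD m N))) with hGcl
  have hsmul : ∀ (c : ℕ) (w : ↥(DD m N)),
      (Tperm w : Equiv.Perm (↥(DD m N) × ZMod m)) ∈ Gcl → Tperm (c • w) ∈ Gcl := by
    intro c w hw
    induction c with
    | zero => rw [zero_smul, Tperm_zero]; exact one_mem _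
    | succ k ih => rw [succ_nsmul, Tperm_add]; exact mul_mem ih hw
  have key : (Tperm (∑ a : ZMod m, (v.1 a).val • (fD m N 0 - fD m N a)) :
      Equiv.Perm (↥(DD m N) × ZMod m)) ∈ Gcl := by
    apply Finset.sum_induction _ (fun w => (Tperm w : Equiv.Perm (↥(DD m N) × ZMod m)) ∈ Gcl)
    · intro a b ha hb; rw [Tperm_add]; exact mul_mem ha hb
    · rw [Tperm_zero]; exact one_mem _
    · intro a _
      exact hsmul _ _ (Tperm_diff_mem (tD m N) (fD m N) a 0)
  have hv : v = ∑ a : ZMod m, (v.1 a).val • (fD m N 0 - fD m N a) := by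
    apply Subtype.ext
    rw [AddSubmonoidClass.coe_finset_sum]
    have hterm : ∀ a : ZMod m,
        (((v.1 a).val • (fD m N 0 - fD m N a) : ↥(DD m N)) : ZMod m → ZMod N)
          = (v.1 a).val • (eV m N a - eV m N 0) := by
      intro a
      rw [← fD_diff_coe m N a]
      rfl
    rw [Finset.sum_congr rfl (fun a _ => hterm a)]
    exact (sum_repr m N v.1 v.2).symm
  rw [hv]
  exact key

theorem psi_embed (ι : Type) [Fintype ι] [DecidableEq ι]
    (g : ι → ZMod m) (hginj : Function.Injective g) (hg0 : ∀ i, g i ≠ 0) :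
    ∃ φ : (ι → ZMod N) →+ ↥(DD m N), Function.Injective φ := by
  let F : ι → ((ι → ZMod N) →+ (ZMod m → ZMod N)) := fun i =>
    ((AddMonoidHom.single (fun _ : ZMod m => ZMod N) (g i))
      - (AddMonoidHom.single (fun _ : ZMod m => ZMod N) 0)).comp
        (Pi.evalAddMonoidHom (fun _ : ι => ZMod N) i)
  let ψ : (ι → ZMod N) →+ (ZMod m → ZMod N) := ∑ i : ι, F i
  have happly : ∀ (v : ι → ZMod N) (x : ZMod m),
      ψ v x = ∑ i : ι, (Pi.single (M := fun _ : ZMod m => ZMod N) (g i) (v i) x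
        - Pi.single (M := fun _ : ZMod m => ZMod N) (0 : ZMod m) (v i) x) := by
    intro v x
    show (∑ i : ι, F i) v x = _
    rw [AddMonoidHom.finset_sum_apply, Finset.sum_apply]
    rfl
  have hmem : ∀ v, ψ v ∈ DD m N := by
    intro v
    show ∑ x, ψ v x = 0
    rw [Finset.sum_congr rfl (fun x _ => happly v x), Finset.sum_comm]
    apply Finset.sum_eq_zero
    intro i _
    rw [Finset.sum_sub_distrib, sum_single, sum_single, sub_self]
  refine ⟨AddMonoidHom.codRestrict ψ (DD m N) hmem, ?_⟩
  rw [injective_iff_map_eq_zero]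
  intro v hv
  have hv' : ψ v = 0 := congrArg Subtype.val hv
  funext i0
  have h0 : ψ v (g i0) = 0 := by rw [hv']; rfl
  rw [happly] at h0
  have hzero : ∀ i : ι, Pi.single (M := fun _ : ZMod m => ZMod N) (0 : ZMod m) (v i) (g i0) = 0 :=
    fun i => Pi.single_eq_of_ne (hg0 i0) _
  have hsum : ∑ i : ι, Pi.single (M := fun _ : ZMod m => ZMod N) (g i) (v i) (g i0) = v i0 := by
    rw [Finset.sum_eq_single i0]
    · exact Pi.single_eq_same _ _
    · intro i _ hne
      exact Pi.single_eq_of_ne (fun hEq => hne ((hginj hEq).symm)) _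
    · intro h; exact absurd (Finset.mem_univ i0) h
  rw [Finset.sum_sub_distrib, hsum] at h0
  rw [Finset.sum_eq_zero (fun i _ => hzero i), sub_zero] at h0
  exact h0

end Emb2


/-- Every finite abelian group embeds into the permutation group of some finite
indecomposable uniconnected non-degenerate involutive solution of the Yang–Baxter equation
of multipermutation level at most 2. (Uniconnected = the permutation group acts regularly,
which implies indecomposability.) -/
theorem finite_abelian_embeds_into_permGroup (A : Type*) [AddCommGroup A] [Finite A] :
    ∃ (X : Type) (_ : Finite X) (S : YBSol X),
      (∀ p q : X, ∃ g ∈ S.G, g p = q) ∧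
      (∀ g ∈ S.G, ∀ p : X, g p = p → g = 1) ∧
      S.MPL2 ∧
      ∃ f : Multiplicative A →* S.G, Function.Injective f := by
  classical
  obtain ⟨ι, hι, n, hn, ⟨e⟩⟩ := AddCommGroup.equiv_directSum_zmod_of_finite' A
  haveI := hι
  set d := Fintype.card ι with hd
  set m := d + 1 with hm
  set N := ∏ i : ι, n i with hN
  haveI : NeZero m := ⟨Nat.succ_ne_zero d⟩
  haveI : NeZero N := ⟨Finset.prod_ne_zero_iff.mpr (fun i _ => by have := hn i; omega)⟩
  obtain ⟨φ1, hφ1⟩ : ∃ φ : (∀ i, ZMod (n i)) →+ (ι → ZMod N), Function.Injective φ :=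
    pi_embed ι n N (fun i => Finset.dvd_prod_of_mem n (Finset.mem_univ i))
      (fun i => by have := hn i; omega)
  let gi : ι → ZMod m := fun i => (((Fintype.equivFin ι i : ℕ) + 1 : ℕ) : ZMod m)
  have hval : ∀ i, (gi i).val = (Fintype.equivFin ι i : ℕ) + 1 := by
    intro i
    apply ZMod.val_cast_of_lt
    have := (Fintype.equivFin ι i).2
    omega
  have hginj : Function.Injective gi := by
    intro i j hij
    have h2 : ((Fintype.equivFin ι i : ℕ)) = (Fintype.equivFin ι j : ℕ) := by
      have h3 := congrArg ZMod.val hij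
      rw [hval, hval] at h3
      omega
    exact (Fintype.equivFin ι).injective (Fin.ext h2)
  have hg0 : ∀ i, gi i ≠ 0 := by
    intro i h
    have h2 := congrArg ZMod.val h
    rw [hval i, ZMod.val_zero] at h2
    omega
  obtain ⟨ψ, hψ⟩ := psi_embed m N ι gi hginj hg0
  let coeHom : (DirectSum ι fun i => ZMod (n i)) →+ (∀ i, ZMod (n i)) :=
    { toFun := fun v i => v i
      map_zero' := rfl
      map_add' := fun a b => rfl }
  have hcoe : Function.Injective coeHom := fun a b hab =>
    DFinsupp.ext fun i => congrFun hab i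
  let α : A →+ ↥(DD m N) := (ψ.comp φ1).comp (coeHom.comp e.toAddMonoidHom)
  have hα : Function.Injective α :=
    hψ.comp (hφ1.comp (hcoe.comp e.injective))
  refine ⟨↥(DD m N) × ZMod m, inferInstance, mySol (tD m N) (fD m N) (fD_rec m N),
    ?_, ?_, ?_, ?_⟩
  · exact mySol_trans (tD m N) (fD m N) (tD_pow_m m N) (fD_zero m N) (Tperm_all_mem m N)
  · exact fun g hg p hp => mySol_free (tD m N) (fD m N) (tD_pow_m m N) g hg p hp
  · exact mySol_MPL2 _ _ _
  · refine ⟨MonoidHom.mk' (fun a =>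
      ⟨Tperm (α (Multiplicative.toAdd a)), Tperm_all_mem m N _⟩) ?_, ?_⟩
    · intro a b
      apply Subtype.ext
      show (Tperm (α (Multiplicative.toAdd (a * b))) : Equiv.Perm (↥(DD m N) × ZMod m))
        = Tperm (α (Multiplicative.toAdd a)) * Tperm (α (Multiplicative.toAdd b))
      rw [toAdd_mul, map_add, Tperm_add]
    · intro a b hab
      have h1 : (Tperm (α (Multiplicative.toAdd a)) : Equiv.Perm (↥(DD m N) × ZMod m))
          = Tperm (α (Multiplicative.toAdd b)) := congrArg Subtype.val hab
      have h2 := congrArg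
        (fun g : Equiv.Perm (↥(DD m N) × ZMod m) => (g ((0 : ↥(DD m N)), (0 : ZMod m))).1) h1
      simp only [Tperm_apply, add_zero] at h2
      exact Multiplicative.toAdd.injective (hα h2)
end

section
/- Let (X,σ,τ) = S(G × ℤ/nℤ, c) and let ≍ be a congruence of the solution, i.e. an equivalence relation such that x₁ ≍ x₂ and y₁ ≍ y₂ imply σ_{x₁}^{ε}(y₁) ≍ σ_{x₂}^{ε}(y₂) for ε ∈ {±1}. Then the set H = {a ∈ G : (a,0) ≍ (0,0)} is a subgroup of G and, for all a, b ∈ G and i ∈ ℤ/nℤ, one has (a,i) ≍ (b,i) if and only if a − b ∈ H. -/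
/-- For a congruence `≍` of `S(G × ℤ/nℤ, c)`, the set `H = {a : (a,0) ≍ (0,0)}` is a
subgroup of `G`, and two pairs with equal second coordinate are congruent iff the difference
of their first coordinates lies in `H`. -/
theorem congruence_subgroup {G : Type*} [AddCommGroup G] {n : ℕ} (hn : 1 ≤ n)
    (c : ZMod n → G) (hc0 : c 0 = 0)
    (hgen : AddSubgroup.closure (Set.range c) = ⊤)
    (E : (G × ZMod n) → (G × ZMod n) → Prop) (hE : Equivalence E)
    (hcong : ∀ x₁ x₂ y₁ y₂ : G × ZMod n, E x₁ x₂ → E y₁ y₂ →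
      E (SσE c x₁ y₁) (SσE c x₂ y₂) ∧ E ((SσE c x₁)⁻¹ y₁) ((SσE c x₂)⁻¹ y₂)) :
    ∃ H : AddSubgroup G,
      (H : Set G) = {a : G | E (a, (0 : ZMod n)) ((0 : G), (0 : ZMod n))} ∧
      (∀ (a b : G) (i : ZMod n), E (a, i) (b, i) ↔ a - b ∈ H) := by

  haveI : NeZero n := ⟨by omega⟩
  -- Applying σ_{(0,k)} to both sides of a congruence at the same level
  have step : ∀ (k : ZMod n) (u v : G) (j : ZMod n), E (u, j) (v, j) →
      E (u + c (k - j - 1) - c (-j - 1), j + 1) (v + c (k - j - 1) - c (-j - 1), j + 1) := by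
    intro k u v j h
    have := (hcong (0, k) (0, k) (u, j) (v, j) (hE.refl _) h).1
    simpa [SσE] using this
  have stepinv : ∀ (k : ZMod n) (u v : G) (j : ZMod n), E (u, j) (v, j) →
      E (u - c (k - j) + c (-j), j - 1) (v - c (k - j) + c (-j), j - 1) := by
    intro k u v j h
    have := (hcong (0, k) (0, k) (u, j) (v, j) (hE.refl _) h).2
    simpa [SσE, Equiv.Perm.inv_def] using this
  -- translation by c m
  have tplus : ∀ (m : ZMod n) (u v : G) (j : ZMod n), E (u, j) (v, j) →
      E (u + c m, j) (v + c m, j) := by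
    intro m u v j h
    have h1 := step (m + j + 1) u v j h
    have h2 := stepinv (j + 1) _ _ (j + 1) h1
    have e : ∀ w : G,
        w + c (m + j + 1 - j - 1) - c (-j - 1) - c (j + 1 - (j + 1)) + c (-(j + 1)) = w + c m := by
      intro w
      rw [show m + j + 1 - j - 1 = m from by ring, show j + 1 - (j + 1) = (0 : ZMod n) from by ring,
        show -(j + 1) = -j - 1 from by ring, hc0]
      abel
    rw [e, e, show j + 1 - 1 = j from by ring] at h2
    exact h2
  have tminus : ∀ (m : ZMod n) (u v : G) (j : ZMod n), E (u, j) (v, j) →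
      E (u + -c m, j) (v + -c m, j) := by
    intro m u v j h
    have h1 := step (j + 1) u v j h
    have h2 := stepinv (m + j + 1) _ _ (j + 1) h1
    have e : ∀ w : G,
        w + c (j + 1 - j - 1) - c (-j - 1) - c (m + j + 1 - (j + 1)) + c (-(j + 1)) = w + -c m := by
      intro w
      rw [show j + 1 - j - 1 = (0 : ZMod n) from by ring,
        show m + j + 1 - (j + 1) = m from by ring,
        show -(j + 1) = -j - 1 from by ring, hc0]
      abel
    rw [e, e, show j + 1 - 1 = j from by ring] at h2
    exact h2
  -- translation by any g : G
  have trans : ∀ (g u v : G) (j : ZMod n), E (u, j) (v, j) → E (u + g, j) (v + g, j) := by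
    set P : G → Prop := fun g => ∀ (u v : G) (j : ZMod n), E (u, j) (v, j) → E (u + g, j) (v + g, j)
      with hP
    have key : ∀ g : G, P g ∧ P (-g) := by
      intro g
      set K : AddSubgroup G :=
        { carrier := {g | P g ∧ P (-g)}
          zero_mem' := by
            constructor <;> · intro u v j h; simpa using h
          add_mem' := by
            rintro g₁ g₂ ⟨h1, h1'⟩ ⟨h2, h2'⟩
            constructor
            · intro u v j h
              have := h2 _ _ j (h1 u v j h)
              simpa [add_assoc] using this
            · intro u v j h
              have := h2' _ _ j (h1' u v j h)
              have e : ∀ w : G, w + -g₁ + -g₂ = w + -(g₁ + g₂) := fun w => by abel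
              rwa [e, e] at this
          neg_mem' := by
            rintro g ⟨h1, h2⟩
            exact ⟨h2, by simpa using h1⟩ } with hK
      have hle : AddSubgroup.closure (Set.range c) ≤ K := by
        rw [AddSubgroup.closure_le]
        rintro _ ⟨m, rfl⟩
        exact ⟨tplus m, tminus m⟩
      rw [hgen] at hle
      exact hle (AddSubgroup.mem_top g)
    exact fun g => (key g).1
  -- level shift upward by one
  have up : ∀ (u v : G) (j : ZMod n), E (u, j) (v, j) → E (u, j + 1) (v, j + 1) := by
    intro u v j h
    have h1 := step (j + 1) u v j h
    have h2 := trans (c (-j - 1)) _ _ (j + 1) h1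
    have e : ∀ w : G, w + c (j + 1 - j - 1) - c (-j - 1) + c (-j - 1) = w := by
      intro w
      rw [show j + 1 - j - 1 = (0 : ZMod n) from by ring, hc0]
      abel
    rw [e, e] at h2
    exact h2
  -- level shift upward by m steps
  have upn : ∀ (m : ℕ) (u v : G) (j : ZMod n), E (u, j) (v, j) → E (u, j + m) (v, j + m) := by
    intro m
    induction m with
    | zero => intro u v j h; simpa using h
    | succ m ih =>
      intro u v j h
      have := up _ _ _ (ih u v j h)
      have e : j + (m : ZMod n) + 1 = j + ((m : ℕ) + 1 : ℕ) := by push_cast; ring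
      rwa [e] at this
  -- key characterization
  have key : ∀ (a b : G) (i : ZMod n), E (a, i) (b, i) ↔ E (a - b, 0) (0, 0) := by
    intro a b i
    constructor
    · intro h
      have h1 := trans (-b) _ _ _ h
      rw [show b + -b = (0 : G) from by abel, show a + -b = a - b from by abel] at h1
      have h2 := upn (n - i.val) _ _ _ h1
      have e : i + ((n - i.val : ℕ) : ZMod n) = 0 := by
        rw [Nat.cast_sub (le_of_lt i.val_lt), ZMod.natCast_self, ZMod.natCast_val,
          ZMod.cast_id]
        ring
      rwa [e] at h2
    · intro h
      have h1 := upn i.val _ _ _ h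
      have e : (0 : ZMod n) + (i.val : ZMod n) = i := by
        rw [ZMod.natCast_val, ZMod.cast_id, zero_add]
      rw [e] at h1
      have h2 := trans b _ _ _ h1
      rwa [show a - b + b = a from by abel, zero_add] at h2
  refine ⟨{ carrier := {a : G | E (a, (0 : ZMod n)) ((0 : G), (0 : ZMod n))}
            zero_mem' := hE.refl _
            add_mem' := ?_
            neg_mem' := ?_ }, rfl, ?_⟩
  · intro a b ha hb
    have h1 := trans a _ _ _ hb
    rw [zero_add] at h1
    have := hE.trans h1 ha
    rwa [show b + a = a + b from by abel] at this
  · intro a ha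
    have h1 := trans (-a) _ _ _ ha
    rw [show a + -a = (0 : G) from by abel, zero_add] at h1
    exact hE.symm h1
  · intro a b i
    exact key a b i
end
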